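/- arXiv:2203.13808 — 7 statements merged into one kernel-verified Lean document; each statement's English description precedes it below -/
import Mathlib

section
/- Let S ⊆ S^{d-1} be a sphere of dimension at least 1, let T be an S-stable set, and let u ∈ S. Then there exists η_0 = η_0(S,T,u) > 0 such that for all 0 < η < η_0: T ∩ S_η(S,u) is equivalent to T ∩ S_{η_0}(S,u), and T is S_η(S,u)-stable. -/
open scoped InnerProductSpace ENNReal Classical
open MeasureTheory

noncomputable section

namespace BootstrapU

/-- Euclidean space `ℝ^d`. -/
abbrev E (d : ℕ) : Type := EuclideanSpace ℝ (Fin d)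

/-- The embedding of the lattice `ℤ^d` into `ℝ^d`. -/
def toE {d : ℕ} (v : Fin d → ℤ) : E d :=
  (EuclideanSpace.equiv (Fin d) ℝ).symm fun i => (v i : ℝ)

/-- The unit sphere `S^{d-1}` of `ℝ^d`. -/
def unitSphere (d : ℕ) : Set (E d) := Metric.sphere 0 1

/-- The rational directions of the sphere: unit vectors whose line meets `ℤ^d ∖ {0}`. -/
def ratSphere (d : ℕ) : Set (E d) :=
  {w | w ∈ unitSphere d ∧ ∃ x : Fin d → ℤ, x ≠ 0 ∧ ∃ c : ℝ, toE x = c • w}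

/-- `L_R`: vectors lying on a line spanned by a non-zero integer vector of norm at most `R`. -/
def LR (d : ℕ) (R : ℝ) : Set (E d) :=
  {w | ∃ x : Fin d → ℤ, x ≠ 0 ∧ ‖toE x‖ ≤ R ∧ ∃ c : ℝ, w = c • toE x}

/-- One step of the bootstrap process with rules `Us`. -/
def bstep {G : Type*} [AddCommGroup G] (Us : Set (Finset G)) (A : Set G) : Set G :=
  A ∪ {x | ∃ X ∈ Us, ∀ y ∈ X, x + y ∈ A}

/-- The closure `[A]` of the bootstrap process with rules `Us`. -/
def bclosure {G : Type*} [AddCommGroup G] (Us : Set (Finset G)) (A : Set G) : Set G :=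
  ⋃ t : ℕ, (bstep Us)^[t] A

/-- A `d`-dimensional update family: a finite collection of finite non-empty subsets of
`ℤ^d ∖ {0}`. -/
def IsUpdateFamily {d : ℕ} (U : Finset (Finset (Fin d → ℤ))) : Prop :=
  ∀ X ∈ U, X.Nonempty ∧ (0 : Fin d → ℤ) ∉ X

/-- The update rules reduced modulo `n`, acting on the torus `(ℤ/nℤ)^d`. -/
def torusRules (d n : ℕ) (U : Finset (Finset (Fin d → ℤ))) : Set (Finset (Fin d → ZMod n)) :=
  ↑(U.image fun X => X.image fun v i => (v i : ZMod n))

/-- The Bernoulli product measure with density `p`, on subsets of `ι` encoded as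
indicator functions `ι → Bool`: the unique probability measure giving each finite
cylinder event its product probability. -/
def bernoulliP (ι : Type*) (p : ℝ) : Measure (ι → Bool) :=
  if h : ∃ μ : Measure (ι → Bool), IsProbabilityMeasure μ ∧
      ∀ (s : Finset ι) (f : ι → Bool),
        μ {ω | ∀ i ∈ s, ω i = f i} =
          ∏ i ∈ s, (if f i then ENNReal.ofReal p else ENNReal.ofReal (1 - p))
  then h.choose else 0

/-- The probability that a `p`-random subset of the torus `(ℤ/nℤ)^d` percolates. -/
def percTorus (d n : ℕ) (U : Finset (Finset (Fin d → ℤ))) (p : ℝ) : ℝ≥0∞ :=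
  bernoulliP (Fin d → ZMod n) p
    {ω | bclosure (torusRules d n U) {x | ω x = true} = Set.univ}

/-- The critical probability `p_c((ℤ/nℤ)^d, U)`. -/
def pcTorus (d n : ℕ) (U : Finset (Finset (Fin d → ℤ))) : ℝ :=
  sInf {p : ℝ | 0 < p ∧ p ≤ 1 ∧ 1 / 2 ≤ percTorus d n U p}

/-- The probability that a `p`-random subset of `ℤ^d` percolates. -/
def percZ (d : ℕ) (U : Finset (Finset (Fin d → ℤ))) (p : ℝ) : ℝ≥0∞ :=
  bernoulliP (Fin d → ℤ) p
    {ω | bclosure (↑U : Set (Finset (Fin d → ℤ))) {x | ω x = true} = Set.univ}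

/-- The critical probability `p_c(ℤ^d, U)`. -/
def pcZ (d : ℕ) (U : Finset (Finset (Fin d → ℤ))) : ℝ :=
  sInf {p : ℝ | 0 < p ∧ p ≤ 1 ∧ 1 / 2 ≤ percZ d U p}

/-- The discrete half-space `H_u ⊆ ℤ^d`. -/
def halfLat {d : ℕ} (u : E d) : Set (Fin d → ℤ) := {x | ⟪toE x, u⟫_ℝ < 0}

/-- The stable set `S(U)` of an update family. -/
def stableSet (d : ℕ) (U : Finset (Finset (Fin d → ℤ))) : Set (E d) :=
  {u | u ∈ unitSphere d ∧
    bclosure (↑U : Set (Finset (Fin d → ℤ))) (halfLat u) = halfLat u}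

/-- The centre of a sphere embedded in the unit sphere: the unique point of the affine
span of `S` equidistant from all points of `S`. -/
def sphCenter {d : ℕ} (S : Set (E d)) : E d :=
  if h : ∃ c : E d, c ∈ affineSpan ℝ S ∧ ∃ r : ℝ, ∀ x ∈ S, dist x c = r then h.choose else 0

/-- The sphere `S_η(S, u) = {v ∈ S : ‖u - v‖ = η}`. -/
def sSphere {d : ℕ} (S : Set (E d)) (u : E d) (η : ℝ) : Set (E d) :=
  {v | v ∈ S ∧ ‖u - v‖ = η}

/-- `S` is a `k`-dimensional sphere of positive radius embedded in the unit sphere: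
the intersection of `S^{d-1}` with a `(k+1)`-dimensional affine subspace. -/
def IsEmbSphere (d k : ℕ) (S : Set (E d)) : Prop :=
  ∃ A : AffineSubspace ℝ (E d), Module.finrank ℝ A.direction = k + 1 ∧
    (∃ y ∈ A, ‖y‖ < 1) ∧ S = ↑A ∩ unitSphere d

/-- `H` is an open hemisphere of the sphere `S`: the intersection of `S` with an open
half-space whose boundary hyperplane contains the centre of `S`. -/
def IsOpenHemi {d : ℕ} (S H : Set (E d)) : Prop :=
  ∃ u : E d, u ≠ 0 ∧ u ∈ (affineSpan ℝ S).direction ∧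
    H = {x | x ∈ S ∧ 0 < ⟪x - sphCenter S, u⟫_ℝ}

/-- `T` is an `S`-stable set: `T ∩ S` is a finite intersection of finite unions of
closed hemispheres of `S`. -/
def IsStableIn {d : ℕ} (S T : Set (E d)) : Prop :=
  ∃ (m : ℕ) (Y : Fin m → Finset (E d)),
    (∀ i, ∀ y ∈ Y i, y ≠ 0 ∧ y ∈ (affineSpan ℝ S).direction) ∧
    T ∩ S = S ∩ ⋂ i, ⋃ y ∈ Y i, {x | 0 ≤ ⟪x - sphCenter S, y⟫_ℝ}

/-- Two subsets of `ℝ^d` are equivalent if one is the image of the other under a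
composition of translations, dilations and rotations. -/
def SimEquiv {d : ℕ} (A B : Set (E d)) : Prop :=
  ∃ (c : ℝ) (O : E d ≃ₗᵢ[ℝ] E d) (b : E d), 0 < c ∧
    LinearMap.det O.toLinearEquiv.toLinearMap = 1 ∧
    B = (fun x => c • O x + b) '' A

/-- Given a function `r` on spheres, `rhoAux r S T u` is the eventual value of
`r (S_η(S,u)) T` for all sufficiently small `η > 0` if `u ∈ T` (and this eventual
value exists), and `0` otherwise. -/
def rhoAux {d : ℕ} (r : Set (E d) → Set (E d) → ℕ) (S T : Set (E d)) (u : E d) : ℕ :=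
  if u ∈ T then
    (if h : ∃ n : ℕ, ∃ η0 : ℝ, 0 < η0 ∧ ∀ η : ℝ, 0 < η → η < η0 → r (sSphere S u η) T = n
      then h.choose else 0)
  else 0

/-- The resistance function `r^k`, applied to `(k-1)`-dimensional spheres `S` and
`S`-stable sets `T`. -/
def resR (d : ℕ) : ℕ → Set (E d) → Set (E d) → ℕ
  | 0, _, _ => 1
  | k + 1, S, T =>
      sInf {n : ℕ | ∃ H : Set (E d), IsOpenHemi S H ∧
        n = sSup {m : ℕ | ∃ u ∈ H, m = rhoAux (resR d k) S T u} + 1}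

/-- The induced resistance `ρ^k`, applied to `k`-dimensional spheres `S`, `S`-stable
sets `T` and `u ∈ S`. -/
def resRho (d k : ℕ) (S T : Set (E d)) (u : E d) : ℕ := rhoAux (resR d k) S T u

/-- The resistance `r(U) = r^d(S^{d-1}; S(U))` of an update family. -/
def resistance (d : ℕ) (U : Finset (Finset (Fin d → ℤ))) : ℕ :=
  resR d d (unitSphere d) (stableSet d U)

/-- The open hemisphere of `S^{d-1}` with pole `u`. -/
def openHemi (d : ℕ) (u : E d) : Set (E d) := {v | v ∈ unitSphere d ∧ 0 < ⟪v, u⟫_ℝ}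

/-- The closed hemisphere of `S^{d-1}` with pole `u`. -/
def closedHemi (d : ℕ) (u : E d) : Set (E d) := {v | v ∈ unitSphere d ∧ 0 ≤ ⟪v, u⟫_ℝ}

/-- The interior of a subset of the sphere `S^{d-1}`, in the topology of the sphere. -/
def sphInt (d : ℕ) (T : Set (E d)) : Set (E d) :=
  {u | u ∈ unitSphere d ∧ ∃ ε : ℝ, 0 < ε ∧ ∀ v ∈ unitSphere d, dist v u < ε → v ∈ T}

/-- `U` is supercritical: some open hemisphere misses the stable set. -/
def Supercritical (d : ℕ) (U : Finset (Finset (Fin d → ℤ))) : Prop :=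
  ∃ u ∈ unitSphere d, openHemi d u ∩ stableSet d U = ∅

/-- `U` is critical: some closed hemisphere meets the stable set in a set with empty
interior, and every open hemisphere meets the stable set. -/
def Critical (d : ℕ) (U : Finset (Finset (Fin d → ℤ))) : Prop :=
  (∃ u ∈ unitSphere d, sphInt d (closedHemi d u ∩ stableSet d U) = ∅) ∧
    ∀ u ∈ unitSphere d, (openHemi d u ∩ stableSet d U).Nonempty

/-- `U` is subcritical: every closed hemisphere meets the stable set in a set with
non-empty interior. -/
def Subcritical (d : ℕ) (U : Finset (Finset (Fin d → ℤ))) : Prop :=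
  ∀ u ∈ unitSphere d, (sphInt d (closedHemi d u ∩ stableSet d U)).Nonempty

/-- The iterated logarithm: `iterLog 0 x = x` and `iterLog (r+1) x = log (iterLog r x)`. -/
def iterLog : ℕ → ℝ → ℝ
  | 0, x => x
  | r + 1, x => Real.log (iterLog r x)

/-- The stable set `S(F)` of a general finite collection of finite subsets of `ℤ^d`. -/
def famStable (d : ℕ) (F : Finset (Finset (Fin d → ℤ))) : Set (E d) :=
  {u | u ∈ unitSphere d ∧ ∀ X ∈ F, ∃ x ∈ X, 0 ≤ ⟪toE x, u⟫_ℝ}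

/-- The span `⟨F⟩` of a family: the span of the union of its rules. -/
def famSpan (d : ℕ) (F : Finset (Finset (Fin d → ℤ))) : Submodule ℝ (E d) :=
  Submodule.span ℝ {y | ∃ X ∈ F, ∃ x ∈ X, y = toE x}

/-- The induced family `F[W] = {X ∩ W^⊥ : X ∈ F, X ⊆ H(W)}`. -/
def induced (d : ℕ) (F : Finset (Finset (Fin d → ℤ))) (W : Set (E d)) :
    Finset (Finset (Fin d → ℤ)) :=
  (F.filter fun X => ∀ x ∈ X, ∀ u ∈ W, ⟪toE x, u⟫_ℝ ≤ 0).image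
    fun X => X.filter fun x => ∀ u ∈ W, ⟪toE x, u⟫_ℝ = 0

/-- The sphere `S(W) = S^{d-1} ∩ W^⊥`. -/
def sphereOf (d : ℕ) (W : Set (E d)) : Set (E d) :=
  {x | x ∈ unitSphere d ∧ x ∈ (Submodule.span ℝ W)ᗮ}

/-- The projection `π(u, W^⊥)`: the unique `v ∈ S(W)` such that `u = w + λ • v` with
`w ∈ span W` and `λ > 0`. -/
def projDir {d : ℕ} (W : Set (E d)) (u : E d) : E d :=
  if h : ∃ v : E d, v ∈ sphereOf d W ∧
      ∃ w ∈ Submodule.span ℝ W, ∃ lam : ℝ, 0 < lam ∧ u = w + lam • v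
  then h.choose else 0

/-- The Voronoi cell of `u` with respect to the finite set `Q ⊆ S^{d-1}`. -/
def cellOf {d : ℕ} (Q : Finset (E d)) (u : E d) : Set (E d) :=
  {w | w ∈ unitSphere d ∧ ∀ v ∈ Q, ⟪v, w⟫_ℝ ≤ ⟪u, w⟫_ℝ}

/-- `Q` is quasistable for range `R`. -/
def IsQuasistable (d : ℕ) (R : ℝ) (Q : Finset (E d)) : Prop :=
  ↑Q ⊆ ratSphere d ∧
  (∀ u ∈ unitSphere d, ∃ q ∈ Q, 0 < ⟪q, u⟫_ℝ) ∧
  ∀ u ∈ Q, ∀ w ∈ LR d R,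
    ((cellOf Q u ∩ {x | ⟪x, w⟫_ℝ = 0}).Nonempty ↔ ⟪u, w⟫_ℝ = 0)

/-- The polytope `P(W)` determined by the quasistable set `Q`. -/
def polyP (d : ℕ) (Q : Finset (E d)) (W : Set (E d)) : Set (E d) :=
  {x | (∀ u ∈ Q, ⟪x, u⟫_ℝ ≤ 1) ∧ ∀ u ∈ W, ⟪x, u⟫_ℝ = 1}

/-- The stretched (tubular) polytope `P(W, w)`. -/
def polyPw (d : ℕ) (Q : Finset (E d)) (W : Set (E d)) (w : E d) : Set (E d) :=
  {x | (∀ u ∈ Q, ⟪x - (if 0 ≤ ⟪u, w⟫_ℝ then w else 0), u⟫_ℝ ≤ 1) ∧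
    ∀ u ∈ W, ⟪x - (if 0 ≤ ⟪u, w⟫_ℝ then w else 0), u⟫_ℝ = 1}

/-- The buffer `E(H)` of a subspace `H` with respect to the sphere `S` and radii `del`,
where `del (i+1)` is the radius `δ_i` used for subspaces of dimension `i+1`, and the
buffer of the zero subspace is empty. -/
def buffer {m : ℕ} (S : Set (E m)) (del : ℕ → ℝ) (H : Submodule ℝ (E m)) : Set (E m) :=
  if Module.finrank ℝ H = 0 then ∅
  else {z | z ∈ S ∧ Metric.infDist z (H : Set (E m)) < del (Module.finrank ℝ H)}

/-- The expanded buffer `E⁺(H)`. -/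
def expBuffer {m : ℕ} (S : Set (E m)) (del : ℕ → ℝ) (H : Submodule ℝ (E m)) : Set (E m) :=
  if Module.finrank ℝ H = 0 then ∅
  else {z | z ∈ S ∧ Metric.infDist z (H : Set (E m)) < 3 * del (Module.finrank ℝ H)}

/-- `(ℝ^{k+1}, S, Hs, del)` is a spherical buffer system, where `del j` denotes `δ_{j-1}`
(so `del 0 = δ_{-1}` is the radius of `S`). -/
def IsSBS (k : ℕ) (S : Set (E (k + 1))) (Hs : Finset (Submodule ℝ (E (k + 1))))
    (del : ℕ → ℝ) : Prop :=
  0 < del 0 ∧ S = Metric.sphere 0 (del 0) ∧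
  (∀ H ∈ Hs, H ≠ ⊤) ∧ (∀ H ∈ Hs, ∀ H' ∈ Hs, H ⊓ H' ∈ Hs) ∧
  ∀ i < k, 0 < del (i + 1) ∧ del (i + 1) < del i / 3

/-- The set `Q̄(B)` of a spherical buffer system. -/
def QbarSBS (k : ℕ) (S : Set (E (k + 1))) (Hs : Finset (Submodule ℝ (E (k + 1))))
    (del : ℕ → ℝ) : Set (E (k + 1)) :=
  S ∩ ⋃ H ∈ insert (⊤ : Submodule ℝ (E (k + 1))) Hs,
    ((H : Set (E (k + 1))) \ ⋃ H' ∈ Hs, ⋃ (_ : H' < H), buffer S del H')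

/-- A good spherical buffer system. -/
def IsGoodSBS (k : ℕ) (S : Set (E (k + 1))) (Hs : Finset (Submodule ℝ (E (k + 1))))
    (del : ℕ → ℝ) : Prop :=
  IsSBS k S Hs del ∧
  ∀ H ∈ Hs, ∀ H' ∈ Hs, ¬H ≤ H' → ¬H' ≤ H →
    expBuffer S del H ∩ expBuffer S del H' ⊆ buffer S del (H ⊓ H')

/-- The set `{±e_1, …, ±e_d} ⊆ ℤ^d`. -/
def basisPM (d : ℕ) : Finset (Fin d → ℤ) :=
  (Finset.univ.image fun i : Fin d => Pi.single i (1 : ℤ)) ∪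
    (Finset.univ.image fun i : Fin d => Pi.single i (-1 : ℤ))

/-- The `r`-neighbour update family `N_r^d`. -/
def Nrd (d r : ℕ) : Finset (Finset (Fin d → ℤ)) :=
  (basisPM d).powerset.filter fun X => X.card = r

/-!
Write `S = A ∩ sphere c r` with `c ∈ A`, and put `w = u - c`. For `0 < η < 2r` the small sphere
`S_η(S, u)` is again a round sphere, centred on the line through `c` and `u`, inside an affine
subspace whose direction `w^⊥ ∩ A.direction` does not depend on `η`. On it, a hemisphere
`⟪x - c, y⟫ ≥ 0` of `S` with `⟪w, y⟫ ≠ 0` is, for small `η`, either everything or nothing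
according to the sign of `⟪w, y⟫`, while a hemisphere with `⟪w, y⟫ = 0` becomes a hemisphere
of `S_η(S, u)`. Hence `T ∩ S_η(S, u)` is cut out of `S_η(S, u)` by hemispheres that do not depend
on `η`, which makes `T` stable for `S_η(S, u)`, and the homothety carrying `S_η(S, u)` onto
`S_η₀(S, u)` carries `T ∩ S_η(S, u)` onto `T ∩ S_η₀(S, u)`.
-/

open Metric Set Topology

section Geometry

variable {V : Type*} [NormedAddCommGroup V] [InnerProductSpace ℝ V]
  {A : AffineSubspace ℝ V} {c : V} {r : ℝ}

lemma add_mem_inter_sphere (hc : c ∈ A) {e : V} (he : e ∈ A.direction) (hn : ‖e‖ = r) :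
    c + e ∈ (A : Set V) ∩ sphere c r := by
  refine ⟨?_, by simpa [mem_sphere_iff_norm] using hn⟩
  simpa [vadd_eq_add, add_comm] using AffineSubspace.vadd_mem_of_mem_direction he hc

lemma direction_affineSpan_inter_sphere (hc : c ∈ A) (hr : 0 < r) :
    (affineSpan ℝ ((A : Set V) ∩ sphere c r)).direction = A.direction := by
  refine le_antisymm (AffineSubspace.direction_le (affineSpan_le.mpr inter_subset_left)) ?_
  intro v hv
  rcases eq_or_ne v 0 with rfl | hv0
  · exact zero_mem _
  set a := r * ‖v‖⁻¹
  have he : a • v ∈ A.direction := A.direction.smul_mem a hv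
  have hen : ‖a • v‖ = r := norm_smul_inv_norm' hr.le hv0
  have hdiff := AffineSubspace.vsub_mem_direction
    (mem_affineSpan ℝ (add_mem_inter_sphere hc he hen))
    (mem_affineSpan ℝ (add_mem_inter_sphere hc (A.direction.neg_mem he) ((norm_neg _).trans hen)))
  rw [vsub_eq_sub, add_sub_add_left_eq_sub, sub_neg_eq_add, ← two_smul ℝ, smul_smul] at hdiff
  exact (Submodule.smul_mem_iff _ (by positivity)).mp hdiff

lemma affineSpan_inter_sphere (hc : c ∈ A) (hr : 0 < r) (hA : A.direction ≠ ⊥) :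
    affineSpan ℝ ((A : Set V) ∩ sphere c r) = A := by
  obtain ⟨v, hv, hv0⟩ := Submodule.exists_mem_ne_zero_of_ne_bot hA
  refine AffineSubspace.eq_of_direction_eq_of_nonempty_of_le
    (direction_affineSpan_inter_sphere hc hr) ?_ (affineSpan_le.mpr inter_subset_left)
  exact (Set.nonempty_of_mem (add_mem_inter_sphere hc (A.direction.smul_mem _ hv)
    (norm_smul_inv_norm' hr.le hv0))).affineSpan ℝ

lemma eq_of_forall_mem_inter_sphere_dist_eq (hc : c ∈ A) (hr : 0 < r) {c' : V} (hc' : c' ∈ A)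
    {r' : ℝ} (h : ∀ x ∈ (A : Set V) ∩ sphere c r, dist x c' = r') : c' = c := by
  by_contra hne
  set q := c' - c
  have hq0 : q ≠ 0 := sub_ne_zero.mpr hne
  have hq : q ∈ A.direction := AffineSubspace.vsub_mem_direction hc' hc
  set a := r * ‖q‖⁻¹
  have hen : ‖a • q‖ = r := norm_smul_inv_norm' hr.le hq0
  have h₁ := add_mem_inter_sphere hc (A.direction.smul_mem a hq) hen
  have h₂ := add_mem_inter_sphere hc (A.direction.neg_mem (A.direction.smul_mem a hq))
    ((norm_neg _).trans hen)
  have horth := EuclideanGeometry.inner_vsub_vsub_of_dist_eq_of_dist_eq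
    (h₁.2.trans h₂.2.symm) ((h _ h₁).trans (h _ h₂).symm)
  rw [vsub_eq_sub, vsub_eq_sub, add_sub_add_left_eq_sub, inner_sub_right, inner_neg_right,
    real_inner_smul_right, real_inner_self_eq_norm_sq] at horth
  have : 0 < a * ‖q‖ ^ 2 := by positivity
  linarith

lemma exists_inter_sphere_eq_inter_sphere [A.direction.HasOrthogonalProjection] {o p : V}
    {R : ℝ} (hp : p ∈ A) (hpo : dist p o < R) :
    ∃ c ∈ A, ∃ r > 0, (A : Set V) ∩ sphere o R = (A : Set V) ∩ sphere c r := by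
  have : Nonempty A := ⟨⟨p, hp⟩⟩
  set c : V := ↑(EuclideanGeometry.orthogonalProjection A o)
  have pythagoras : ∀ v ∈ A, dist v o ^ 2 = dist v c ^ 2 + dist o c ^ 2 := fun v hv => by
    simpa only [sq] using
      EuclideanGeometry.dist_sq_eq_dist_orthogonalProjection_sq_add_dist_orthogonalProjection_sq
        o hv
  have hR : 0 < R := dist_nonneg.trans_lt hpo
  have hpos : 0 < R ^ 2 - dist o c ^ 2 := by
    nlinarith [pythagoras p hp, dist_nonneg (x := p) (y := c), dist_nonneg (x := p) (y := o)]
  refine ⟨c, EuclideanGeometry.orthogonalProjection_mem o, _, Real.sqrt_pos.mpr hpos, ?_⟩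
  ext v
  refine and_congr_right fun hv => ?_
  rw [mem_sphere, mem_sphere, ← sq_eq_sq₀ dist_nonneg hR.le,
    ← sq_eq_sq₀ dist_nonneg (Real.sqrt_nonneg _), Real.sq_sqrt hpos.le, pythagoras v hv]
  constructor <;> intro h <;> linarith

lemma norm_eq_and_norm_sub_eq_iff {w z : V} {η t : ℝ} (hw : ‖w‖ = r) (hη : 0 ≤ η)
    (ht : t * r ^ 2 = r ^ 2 - η ^ 2 / 2) :
    ‖z‖ = r ∧ ‖w - z‖ = η ↔ ⟪w, z - t • w⟫_ℝ = 0 ∧ ‖z - t • w‖ ^ 2 = (1 - t ^ 2) * r ^ 2 := by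
  have hr : 0 ≤ r := hw ▸ norm_nonneg w
  have hwz : ‖w - z‖ ^ 2 = r ^ 2 - 2 * ⟪w, z⟫_ℝ + ‖z‖ ^ 2 := by rw [norm_sub_sq_real, hw]
  have hzw : ‖z - t • w‖ ^ 2 = ‖z‖ ^ 2 - 2 * t * ⟪w, z⟫_ℝ + t ^ 2 * r ^ 2 := by
    rw [norm_sub_sq_real, real_inner_smul_right, norm_smul, mul_pow, hw, Real.norm_eq_abs,
      sq_abs, real_inner_comm]
    ring
  have hinner : ⟪w, z - t • w⟫_ℝ = ⟪w, z⟫_ℝ - t * r ^ 2 := by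
    rw [inner_sub_right, real_inner_smul_right, real_inner_self_eq_norm_sq, hw]
  rw [hinner, hzw, ← sq_eq_sq₀ (norm_nonneg z) hr, ← sq_eq_sq₀ (norm_nonneg _) hη, hwz]
  constructor
  · rintro ⟨hz, hη'⟩
    have hX : ⟪w, z⟫_ℝ = t * r ^ 2 := by linarith
    exact ⟨by linarith, by rw [hz, hX]; ring⟩
  · rintro ⟨hX, hz⟩
    rw [show ⟪w, z⟫_ℝ = t * r ^ 2 by linarith] at hz
    exact ⟨by linarith, by linarith⟩

lemma orthogonal_span_singleton_inf_ne_bot {K : Submodule ℝ V} [FiniteDimensional ℝ K] {w : V}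
    (hw : w ∈ K) (hK : 2 ≤ Module.finrank ℝ K) : (ℝ ∙ w)ᗮ ⊓ K ≠ ⊥ := fun h => by
  have hsum := Submodule.finrank_add_inf_finrank_orthogonal
    ((Submodule.span_singleton_le_iff_mem w K).mpr hw)
  have hw1 : Module.finrank ℝ (ℝ ∙ w) ≤ 1 := (finrank_span_le_card {w}).trans (by simp)
  rw [h, finrank_bot] at hsum
  omega

end Geometry

section Hemispheres

variable {V : Type*} [NormedAddCommGroup V] [InnerProductSpace ℝ V] {m : ℕ}

def hemiCut (c : V) (Y : Fin m → Finset V) : Set V :=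
  ⋂ i, ⋃ y ∈ Y i, {x | 0 ≤ ⟪x - c, y⟫_ℝ}

/-- Near a point `w`, the `i`-th union of hemispheres of `Y` either holds everywhere (encoded by
the pair of opposite poles `p, -p`) or reduces to its poles orthogonal to `w`. -/
def localFamily (w p : V) (Y : Fin m → Finset V) (i : Fin m) : Finset V :=
  if ∃ y ∈ Y i, 0 < ⟪w, y⟫_ℝ then {p, -p} else (Y i).filter fun y => ⟪w, y⟫_ℝ = 0

lemma eventually_nonneg_inner_iff (F : Finset V) (w : V) :
    ∀ᶠ z in 𝓝 w, ∀ y ∈ F, ⟪w, y⟫_ℝ ≠ 0 → (0 ≤ ⟪z, y⟫_ℝ ↔ 0 < ⟪w, y⟫_ℝ) := by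
  rw [Filter.eventually_all_finset]
  intro y _
  have hcont : ContinuousAt (fun z => ⟪z, y⟫_ℝ) w :=
    (continuous_id.inner continuous_const).continuousAt
  rcases lt_trichotomy ⟪w, y⟫_ℝ 0 with hneg | hzero | hpos
  · filter_upwards [hcont.eventually_lt continuousAt_const hneg] with z hz _
    exact iff_of_false hz.not_ge hneg.not_gt
  · exact Filter.Eventually.of_forall fun _ h => absurd hzero h
  · filter_upwards [continuousAt_const.eventually_lt hcont hpos] with z hz _
    exact iff_of_true hz.le hpos

lemma mem_hemiCut_iff_mem_hemiCut_localFamily {c w x : V} (p : V) (t : ℝ)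
    {Y : Fin m → Finset V}
    (hsign : ∀ i, ∀ y ∈ Y i, ⟪w, y⟫_ℝ ≠ 0 → (0 ≤ ⟪x - c, y⟫_ℝ ↔ 0 < ⟪w, y⟫_ℝ)) :
    x ∈ hemiCut c Y ↔ x ∈ hemiCut (c + t • w) (localFamily w p Y) := by
  have hshift : ∀ y, ⟪w, y⟫_ℝ = 0 → ⟪x - (c + t • w), y⟫_ℝ = ⟪x - c, y⟫_ℝ := fun y hy => by
    rw [sub_add_eq_sub_sub, inner_sub_left, real_inner_smul_left, hy, mul_zero, sub_zero]
  simp only [hemiCut, localFamily, mem_iInter, mem_iUnion, mem_ofPred_eq, exists_prop]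
  refine forall_congr' fun i => ?_
  split_ifs with hpos
  · obtain ⟨y, hy, hwy⟩ := hpos
    refine iff_of_true ⟨y, hy, (hsign i y hy hwy.ne').mpr hwy⟩ ?_
    rcases le_total 0 ⟪x - (c + t • w), p⟫_ℝ with h | h
    · exact ⟨p, by simp, h⟩
    · exact ⟨-p, by simp, by rwa [inner_neg_right, neg_nonneg]⟩
  · push Not at hpos
    constructor
    · rintro ⟨y, hy, hxy⟩
      have hwy : ⟪w, y⟫_ℝ = 0 := by
        by_contra hne
        exact (hpos y hy).not_gt ((hsign i y hy hne).mp hxy)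
      exact ⟨y, Finset.mem_filter.mpr ⟨hy, hwy⟩, (hshift y hwy).symm ▸ hxy⟩
    · rintro ⟨y, hy, hxy⟩
      obtain ⟨hy, hwy⟩ := Finset.mem_filter.mp hy
      exact ⟨y, hy, hshift y hwy ▸ hxy⟩

lemma localFamily_mem {K : Submodule ℝ V} {w p : V} (hp : p ∈ (ℝ ∙ w)ᗮ ⊓ K) (hp0 : p ≠ 0)
    {Y : Fin m → Finset V} (hY : ∀ i, ∀ y ∈ Y i, y ≠ 0 ∧ y ∈ K) :
    ∀ i, ∀ y ∈ localFamily w p Y i, y ≠ 0 ∧ y ∈ (ℝ ∙ w)ᗮ ⊓ K := by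
  intro i y hy
  unfold localFamily at hy
  split_ifs at hy
  · rcases Finset.mem_insert.mp hy with rfl | hy
    · exact ⟨hp0, hp⟩
    · rw [Finset.mem_singleton.mp hy]
      exact ⟨neg_ne_zero.mpr hp0, Submodule.neg_mem _ hp⟩
  · obtain ⟨hy, hwy⟩ := Finset.mem_filter.mp hy
    exact ⟨(hY i y hy).1, Submodule.mem_inf.mpr
      ⟨Submodule.mem_orthogonal_singleton_iff_inner_right.mpr hwy, (hY i y hy).2⟩⟩

lemma add_smul_mem_inter_hemiCut {D : Submodule ℝ V} {c c' z : V} {r a : ℝ} (ha : 0 < a)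
    {Y : Fin m → Finset V}
    (h : c + z ∈ (AffineSubspace.mk' c D : Set V) ∩ sphere c r ∩ hemiCut c Y) :
    c' + a • z ∈ (AffineSubspace.mk' c' D : Set V) ∩ sphere c' (a * r) ∩ hemiCut c' Y := by
  simp only [hemiCut, mem_inter_iff, SetLike.mem_coe, AffineSubspace.mem_mk', vsub_eq_sub,
    mem_sphere_iff_norm, add_sub_cancel_left, mem_iInter, mem_iUnion, mem_ofPred_eq,
    exists_prop] at h ⊢
  obtain ⟨⟨hzD, hzr⟩, hz⟩ := h
  refine ⟨⟨D.smul_mem a hzD, by rw [norm_smul, Real.norm_of_nonneg ha.le, hzr]⟩, fun i => ?_⟩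
  obtain ⟨y, hy, hzy⟩ := hz i
  exact ⟨y, hy, by rw [real_inner_smul_left]; positivity⟩

end Hemispheres

section EmbeddedSpheres

variable {d : ℕ} {A : AffineSubspace ℝ (E d)} {c : E d} {r : ℝ}

lemma IsEmbSphere.exists_eq_inter_sphere {k : ℕ} {S : Set (E d)} (hS : IsEmbSphere d k S) :
    ∃ (A : AffineSubspace ℝ (E d)) (c : E d) (r : ℝ), Module.finrank ℝ A.direction = k + 1 ∧
      c ∈ A ∧ 0 < r ∧ S = (A : Set (E d)) ∩ sphere c r := by
  obtain ⟨A, hdim, ⟨p, hpA, hp⟩, rfl⟩ := hS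
  obtain ⟨c, hcA, r, hr, hSA⟩ :=
    exists_inter_sphere_eq_inter_sphere hpA (by rwa [dist_zero_right] : dist p 0 < 1)
  exact ⟨A, c, r, hdim, hcA, hr, hSA⟩

lemma sSphere_inter_sphere {u : E d} {η : ℝ} (hc : c ∈ A)
    (hu : u ∈ (A : Set (E d)) ∩ sphere c r) (hη : 0 < η) (hη2 : η < 2 * r) :
    ∃ t ρ : ℝ, 0 < ρ ∧ sSphere ((A : Set (E d)) ∩ sphere c r) u η =
      (AffineSubspace.mk' (c + t • (u - c)) ((ℝ ∙ (u - c))ᗮ ⊓ A.direction) : Set (E d)) ∩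
        sphere (c + t • (u - c)) ρ := by
  obtain ⟨huA, hur⟩ := hu
  rw [mem_sphere_iff_norm] at hur
  have hr : 0 < r := by linarith
  set t := 1 - η ^ 2 / (2 * r ^ 2)
  have htr : t * r ^ 2 = r ^ 2 - η ^ 2 / 2 := by simp only [t]; field_simp
  have hpos : 0 < (1 - t ^ 2) * r ^ 2 := by
    have hlt : η ^ 2 / (2 * r ^ 2) < 2 := by rw [div_lt_iff₀ (by positivity)]; nlinarith
    have : 0 < η ^ 2 / (2 * r ^ 2) := by positivity
    exact mul_pos (by simp only [t]; nlinarith) (by positivity)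
  refine ⟨t, √((1 - t ^ 2) * r ^ 2), Real.sqrt_pos.mpr hpos, ?_⟩
  have hcA : c + t • (u - c) ∈ A := by
    simpa [vadd_eq_add, add_comm] using AffineSubspace.vadd_mem_of_mem_direction
      (A.direction.smul_mem t (AffineSubspace.vsub_mem_direction huA hc)) hc
  ext v
  have hsections := norm_eq_and_norm_sub_eq_iff (z := v - c) hur hη.le htr
  simp only [sSphere, mem_inter_iff, mem_ofPred_eq, SetLike.mem_coe, AffineSubspace.mem_mk',
    mem_sphere_iff_norm, vsub_eq_sub, Submodule.mem_inf,
    Submodule.mem_orthogonal_singleton_iff_inner_right]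
  rw [← AffineSubspace.vsub_right_mem_direction_iff_mem hcA, vsub_eq_sub, sub_add_eq_sub_sub,
    ← sub_sub_sub_cancel_right u v c, ← sq_eq_sq₀ (norm_nonneg _) (Real.sqrt_nonneg _),
    Real.sq_sqrt hpos.le]
  tauto

lemma sphCenter_inter_sphere (hc : c ∈ A) (hr : 0 < r) (hA : A.direction ≠ ⊥) :
    sphCenter ((A : Set (E d)) ∩ sphere c r) = c := by
  have hspan := affineSpan_inter_sphere hc hr hA
  have hex : ∃ c' ∈ affineSpan ℝ ((A : Set (E d)) ∩ sphere c r),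
      ∃ r' : ℝ, ∀ x ∈ (A : Set (E d)) ∩ sphere c r, dist x c' = r' :=
    ⟨c, hspan.ge hc, r, fun _ hx => hx.2⟩
  rw [sphCenter, dif_pos hex]
  obtain ⟨hmem, r', hr'⟩ := hex.choose_spec
  exact eq_of_forall_mem_inter_sphere_dist_eq hc hr (hspan.le hmem) hr'

lemma isStableIn_inter_sphere_iff (hc : c ∈ A) (hr : 0 < r) (hA : A.direction ≠ ⊥)
    (T : Set (E d)) :
    IsStableIn ((A : Set (E d)) ∩ sphere c r) T ↔ ∃ (m : ℕ) (Y : Fin m → Finset (E d)),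
      (∀ i, ∀ y ∈ Y i, y ≠ 0 ∧ y ∈ A.direction) ∧
        T ∩ ((A : Set (E d)) ∩ sphere c r) = (A : Set (E d)) ∩ sphere c r ∩ hemiCut c Y := by
  rw [IsStableIn, affineSpan_inter_sphere hc hr hA, sphCenter_inter_sphere hc hr hA]
  rfl

lemma simEquiv_inter_hemiCut {m : ℕ} {D : Submodule ℝ (E d)} {c₁ c₂ : E d} {r₁ r₂ : ℝ}
    (hr₁ : 0 < r₁) (hr₂ : 0 < r₂) (Y : Fin m → Finset (E d)) :
    SimEquiv ((AffineSubspace.mk' c₁ D : Set (E d)) ∩ sphere c₁ r₁ ∩ hemiCut c₁ Y)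
      ((AffineSubspace.mk' c₂ D : Set (E d)) ∩ sphere c₂ r₂ ∩ hemiCut c₂ Y) := by
  set a := r₂ / r₁
  have ha : 0 < a := div_pos hr₂ hr₁
  refine ⟨a, LinearIsometryEquiv.refl ℝ (E d), c₂ - a • c₁, ha, LinearMap.det_id, ?_⟩
  ext x
  simp only [mem_image, LinearIsometryEquiv.coe_refl, id_eq]
  constructor
  · intro hx
    refine ⟨c₁ + a⁻¹ • (x - c₂), ?_, by rw [smul_add, smul_inv_smul₀ ha.ne']; abel⟩
    have := add_smul_mem_inter_hemiCut (c' := c₁) (inv_pos.mpr ha)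
      (by rwa [add_sub_cancel] : c₂ + (x - c₂) ∈ _)
    rwa [inv_mul_eq_div, div_div_cancel₀ hr₂.ne'] at this
  · rintro ⟨z, hz, rfl⟩
    have := add_smul_mem_inter_hemiCut (c' := c₂) ha (by rwa [add_sub_cancel] : c₁ + (z - c₁) ∈ _)
    rw [div_mul_cancel₀ _ hr₁.ne'] at this
    convert this using 1
    rw [smul_sub]
    abel

lemma eventually_sSphere_eq_inter_hemiCut {m : ℕ} {T : Set (E d)} {Y : Fin m → Finset (E d)}
    {u : E d} (hc : c ∈ A) (hr : 0 < r) (hu : u ∈ (A : Set (E d)) ∩ sphere c r)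
    (hTS : T ∩ ((A : Set (E d)) ∩ sphere c r) = (A : Set (E d)) ∩ sphere c r ∩ hemiCut c Y)
    (q : E d) :
    ∀ᶠ η in 𝓝[>] 0, ∃ (c' : E d) (ρ : ℝ), 0 < ρ ∧
      sSphere ((A : Set (E d)) ∩ sphere c r) u η =
        (AffineSubspace.mk' c' ((ℝ ∙ (u - c))ᗮ ⊓ A.direction) : Set (E d)) ∩ sphere c' ρ ∧
      T ∩ sSphere ((A : Set (E d)) ∩ sphere c r) u η =
        sSphere ((A : Set (E d)) ∩ sphere c r) u η ∩ hemiCut c' (localFamily (u - c) q Y) := by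
  obtain ⟨ε, hε, hsign⟩ := Metric.eventually_nhds_iff.mp
    (eventually_nonneg_inner_iff (Finset.univ.biUnion Y) (u - c))
  filter_upwards [eventually_mem_nhdsWithin, eventually_nhdsWithin_of_eventually_nhds
    (eventually_lt_nhds (show (0 : ℝ) < min (2 * r) ε by positivity))] with η hη hηsmall
  obtain ⟨t, ρ, hρ, hSη⟩ := sSphere_inter_sphere hc hu hη (hηsmall.trans_le (min_le_left _ _))
  refine ⟨c + t • (u - c), ρ, hρ, hSη, ?_⟩
  have hH : ∀ x ∈ sSphere ((A : Set (E d)) ∩ sphere c r) u η,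
      x ∈ hemiCut c Y ↔ x ∈ hemiCut (c + t • (u - c)) (localFamily (u - c) q Y) := by
    refine fun x hx => mem_hemiCut_iff_mem_hemiCut_localFamily q t fun i y hy => hsign ?_ y
      (Finset.mem_biUnion.mpr ⟨i, Finset.mem_univ i, hy⟩)
    rw [dist_eq_norm, sub_sub_sub_cancel_right, norm_sub_rev, hx.2]
    exact hηsmall.trans_le (min_le_right _ _)
  ext x
  constructor
  · rintro ⟨hxT, hx⟩
    exact ⟨hx, (hH x hx).mp (hTS.subset ⟨hxT, hx.1⟩).2⟩
  · rintro ⟨hx, hxH⟩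
    exact ⟨(hTS.symm.subset ⟨hx.1, (hH x hx).mpr hxH⟩).1, hx⟩

end EmbeddedSpheres

/-- well-definedness of the small spheres `S_η(S, u)`. -/
theorem stable_welldefined (d k : ℕ) (hk : 1 ≤ k) (S T : Set (E d))
    (hS : IsEmbSphere d k S) (hT : IsStableIn S T) (u : E d) (hu : u ∈ S) :
    ∃ η0 : ℝ, 0 < η0 ∧ ∀ η : ℝ, 0 < η → η < η0 →
      SimEquiv (T ∩ sSphere S u η) (T ∩ sSphere S u η0) ∧
        IsStableIn (sSphere S u η) T := by
  obtain ⟨A, c, r, hdim, hcA, hr, rfl⟩ := hS.exists_eq_inter_sphere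
  have hD := orthogonal_span_singleton_inf_ne_bot (AffineSubspace.vsub_mem_direction hu.1 hcA)
    (by omega : 2 ≤ Module.finrank ℝ A.direction)
  obtain ⟨q, hqD, hq0⟩ := Submodule.exists_mem_ne_zero_of_ne_bot hD
  obtain ⟨m, Y, hY, hTS⟩ :=
    (isStableIn_inter_sphere_iff hcA hr (ne_bot_of_le_ne_bot hD inf_le_right) T).mp hT
  obtain ⟨η₁, hη₁, hsmall⟩ := mem_nhdsGT_iff_exists_Ioo_subset.mp
    (eventually_sSphere_eq_inter_hemiCut hcA hr hu hTS q)
  refine ⟨η₁ / 2, half_pos hη₁, fun η hη hlt => ?_⟩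
  obtain ⟨c₁, ρ₁, hρ₁, hS₁, hT₁⟩ := hsmall ⟨hη, hlt.trans (half_lt_self hη₁)⟩
  obtain ⟨c₀, ρ₀, hρ₀, hS₀, hT₀⟩ := hsmall ⟨half_pos hη₁, half_lt_self hη₁⟩
  rw [hT₁, hT₀, hS₁, hS₀]
  refine ⟨simEquiv_inter_hemiCut hρ₁ hρ₀ _, ?_⟩
  rw [isStableIn_inter_sphere_iff (AffineSubspace.self_mem_mk' _ _) hρ₁
    (by rwa [AffineSubspace.direction_mk']), AffineSubspace.direction_mk']
  exact ⟨m, localFamily _ q Y, localFamily_mem hqD hq0 hY, hS₁ ▸ hT₁⟩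

end BootstrapU

end
end

section
/- Let W ⊆ S_Q^{d-1}, let u ∈ S_Q^{d-1} ∩ W^⊥, and set W' = W ∪ {u}. Let F be a finite collection of finite subsets of Z^d ∖ {0} with ⟨F⟩ ⊆ W^⊥. Then there exists η_0 > 0 such that for all 0 < η < η_0 and all v ∈ S_η(S(W),u): v ∈ S(F) if and only if π(v, W'^⊥) ∈ S(F[u]). In particular, S(F) ∩ S_η(S(W),u) is equivalent to S(F[u]) ∩ S(W'). -/
open scoped InnerProductSpace ENNReal Classical
open MeasureTheory

noncomputable section

namespace BootstrapU

private lemma eq_of_sq_eq'' {a b : ℝ} (ha : 0 ≤ a) (hb : 0 ≤ b) (h : a^2 = b^2) : a = b := by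
  have h1 : (a - b) * (a + b) = 0 := by nlinarith
  rcases mul_eq_zero.mp h1 with h2 | h2 <;> linarith

private lemma mem_orth_span' {d : ℕ} (s : Set (E d)) (z : E d)
    (h : ∀ y ∈ s, ⟪y, z⟫_ℝ = 0) : z ∈ (Submodule.span ℝ s)ᗮ := by
  have hle : Submodule.span ℝ s ≤ (Submodule.span ℝ {z})ᗮ :=
    Submodule.span_le.mpr fun y hy =>
      Submodule.mem_orthogonal_singleton_iff_inner_left.mpr (h y hy)
  exact Submodule.orthogonal_le hle
    (Submodule.le_orthogonal_orthogonal _ (Submodule.mem_span_singleton_self z))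

set_option maxHeartbeats 1600000 in
/-- the equivalence lemma for induced families. -/
theorem induced_projection (d : ℕ) (W : Set (E d)) (hW : W ⊆ ratSphere d)
    (u : E d) (hu : u ∈ ratSphere d) (huW : u ∈ (Submodule.span ℝ W)ᗮ)
    (F : Finset (Finset (Fin d → ℤ))) (hF : ∀ X ∈ F, (0 : Fin d → ℤ) ∉ X)
    (hspan : famSpan d F ≤ (Submodule.span ℝ W)ᗮ) :
    ∃ η0 : ℝ, 0 < η0 ∧ ∀ η : ℝ, 0 < η → η < η0 →
      (∀ v ∈ sSphere (sphereOf d W) u η,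
        (v ∈ famStable d F ↔ projDir (W ∪ {u}) v ∈ famStable d (induced d F {u}))) ∧
      SimEquiv (famStable d F ∩ sSphere (sphereOf d W) u η)
        (famStable d (induced d F {u}) ∩ sphereOf d (W ∪ {u})) := by
  classical
  have hu1 : ‖u‖ = 1 := mem_sphere_zero_iff_norm.mp hu.1
  set A : Finset (Fin d → ℤ) := F.sup id with hA
  have memA : ∀ {X : Finset (Fin d → ℤ)} {x : Fin d → ℤ}, X ∈ F → x ∈ X → x ∈ A := by
    intro X x hX hx; exact Finset.mem_sup.mpr ⟨X, hX, hx⟩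
  set ηf : (Fin d → ℤ) → ℝ := fun x =>
    if ⟪toE x, u⟫_ℝ = 0 then 1 else min 1 (|⟪toE x, u⟫_ℝ| / (2 * ‖toE x‖ + 1)) with hηf
  have hηfpos : ∀ x, 0 < ηf x := by
    intro x
    by_cases h : ⟪toE x, u⟫_ℝ = 0
    · simp only [hηf]; rw [if_pos h]; exact one_pos
    · have h1 : 0 < |⟪toE x, u⟫_ℝ| := abs_pos.mpr h
      have h2 : (0:ℝ) < 2 * ‖toE x‖ + 1 := by positivity
      simp only [hηf, if_neg h]
      exact lt_min one_pos (div_pos h1 h2)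
  set η0 : ℝ := if h : A.Nonempty then min 1 (A.inf' h ηf) else 1 with hη0
  have hη0pos : 0 < η0 := by
    by_cases h : A.Nonempty
    · rw [hη0, dif_pos h]
      exact lt_min one_pos ((Finset.lt_inf'_iff h).mpr fun x _ => hηfpos x)
    · rw [hη0, dif_neg h]; exact one_pos
  have hη01 : η0 ≤ 1 := by
    by_cases h : A.Nonempty
    · rw [hη0, dif_pos h]; exact min_le_left _ _
    · rw [hη0, dif_neg h]
  have hη0le : ∀ x ∈ A, η0 ≤ ηf x := by
    intro x hx
    have h : A.Nonempty := ⟨x, hx⟩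
    rw [hη0, dif_pos h]
    exact le_trans (min_le_right _ _) (Finset.inf'_le _ hx)
  refine ⟨η0, hη0pos, ?_⟩
  intro η hη hηlt
  have hη1 : η ≤ 1 := le_of_lt (lt_of_lt_of_le hηlt hη01)
  have hη2 : η^2 ≤ 1 := by nlinarith [mul_le_mul hη1 hη1 hη.le zero_le_one]
  have hη2pos : 0 < η^2 := by positivity
  set cθ : ℝ := 1 - η^2/2 with hcθ
  have hc1 : 1/2 ≤ cθ := by rw [hcθ]; linarith
  have hclt : cθ < 1 := by rw [hcθ]; linarith
  have hcsq : cθ^2 < 1 := by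
    rw [hcθ]
    nlinarith [hη2, hη2pos, mul_le_mul_of_nonneg_left hη2 (sq_nonneg η)]
  set sθ : ℝ := Real.sqrt (1 - cθ^2) with hsθ
  have hs2 : sθ^2 = 1 - cθ^2 := Real.sq_sqrt (by linarith)
  have hspos : 0 < sθ := Real.sqrt_pos.mpr (by linarith)
  have hsle : sθ ≤ η := by
    have h1 : (1 : ℝ) - cθ^2 ≤ η^2 := by rw [hcθ]; nlinarith [sq_nonneg (η^2)]
    calc sθ ≤ Real.sqrt (η^2) := Real.sqrt_le_sqrt h1
    _ = η := Real.sqrt_sq hη.le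
  clear_value sθ cθ
  have key : ∀ x ∈ A, ∀ z : E d, ‖z‖ = 1 →
      |sθ * ⟪toE x, z⟫_ℝ| < cθ * |⟪toE x, u⟫_ℝ| ∨ ⟪toE x, u⟫_ℝ = 0 := by
    intro x hx z hz
    by_cases h : ⟪toE x, u⟫_ℝ = 0
    · exact Or.inr h
    left
    have hb : |⟪toE x, z⟫_ℝ| ≤ ‖toE x‖ := by
      have h' := abs_real_inner_le_norm (toE x) z
      rwa [hz, mul_one] at h'
    have hηx : η < ηf x := lt_of_lt_of_le hηlt (hη0le x hx)
    have h2 : (0:ℝ) < 2 * ‖toE x‖ + 1 := by positivity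
    have h3 : ηf x ≤ |⟪toE x, u⟫_ℝ| / (2 * ‖toE x‖ + 1) := by
      rw [hηf]; simp only [if_neg h]; exact min_le_right _ _
    have h4 : η * (2 * ‖toE x‖ + 1) < |⟪toE x, u⟫_ℝ| := by
      rw [← lt_div_iff₀ h2]; exact lt_of_lt_of_le hηx h3
    have h5 : |sθ * ⟪toE x, z⟫_ℝ| ≤ η * ‖toE x‖ := by
      rw [abs_mul, abs_of_pos hspos]
      exact mul_le_mul hsle hb (abs_nonneg _) hη.le
    have h6 : (0:ℝ) ≤ ‖toE x‖ := norm_nonneg _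
    nlinarith [mul_nonneg (by linarith : (0:ℝ) ≤ cθ - 1/2) (abs_nonneg ⟪toE x, u⟫_ℝ)]
  have innerformula : ∀ (x : Fin d → ℤ) (z : E d),
      ⟪toE x, cθ • u + sθ • z⟫_ℝ = cθ * ⟪toE x, u⟫_ℝ + sθ * ⟪toE x, z⟫_ℝ := by
    intro x z
    rw [inner_add_right, real_inner_smul_right, real_inner_smul_right]
  have signpos : ∀ x ∈ A, ∀ z : E d, ‖z‖ = 1 → 0 < ⟪toE x, u⟫_ℝ →
      0 ≤ ⟪toE x, cθ • u + sθ • z⟫_ℝ := by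
    intro x hx z hz hxu
    rcases key x hx z hz with h | h
    · rw [innerformula]
      rw [abs_of_pos hxu] at h
      have h' := neg_abs_le (sθ * ⟪toE x, z⟫_ℝ)
      linarith
    · rw [h] at hxu; exact absurd hxu (lt_irrefl 0)
  have signneg : ∀ x ∈ A, ∀ z : E d, ‖z‖ = 1 → ⟪toE x, u⟫_ℝ < 0 →
      ⟪toE x, cθ • u + sθ • z⟫_ℝ < 0 := by
    intro x hx z hz hxu
    rcases key x hx z hz with h | h
    · rw [innerformula]
      rw [abs_of_neg hxu] at h
      have h' := le_abs_self (sθ * ⟪toE x, z⟫_ℝ)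
      linarith
    · rw [h] at hxu; exact absurd hxu (lt_irrefl 0)
  have signzero : ∀ (x : Fin d → ℤ) (z : E d), ⟪toE x, u⟫_ℝ = 0 →
      ⟪toE x, cθ • u + sθ • z⟫_ℝ = sθ * ⟪toE x, z⟫_ℝ := by
    intro x z h
    rw [innerformula, h, mul_zero, zero_add]
  have hnorm1 : ∀ z : E d, ‖z‖ = 1 → ⟪u, z⟫_ℝ = 0 → ‖cθ • u + sθ • z‖ = 1 := by
    intro z hz huz
    have hin : ⟪cθ • u, sθ • z⟫_ℝ = 0 := by
      rw [real_inner_smul_left, real_inner_smul_right, huz]; ring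
    apply eq_of_sq_eq'' (norm_nonneg _) zero_le_one
    rw [norm_add_sq_real, hin, norm_smul, norm_smul, hu1, hz,
      Real.norm_eq_abs, Real.norm_eq_abs]
    rw [mul_one, mul_one, mul_zero, add_zero, sq_abs, sq_abs, hs2]; ring
  have hcore : ∀ z : E d, ‖z‖ = 1 → ⟪u, z⟫_ℝ = 0 →
      ((cθ • u + sθ • z) ∈ famStable d F ↔ z ∈ famStable d (induced d F {u})) := by
    intro z hz huz
    constructor
    · rintro ⟨-, hstab⟩
      refine ⟨mem_sphere_zero_iff_norm.mpr hz, ?_⟩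
      intro Y hY
      rw [induced, Finset.mem_image] at hY
      obtain ⟨X, hXmem, rfl⟩ := hY
      rw [Finset.mem_filter] at hXmem
      obtain ⟨hXF, hXneg⟩ := hXmem
      obtain ⟨x, hxX, hxv⟩ := hstab X hXF
      have hxu : ⟪toE x, u⟫_ℝ ≤ 0 := hXneg x hxX u rfl
      have hxu0 : ⟪toE x, u⟫_ℝ = 0 := by
        rcases lt_or_eq_of_le hxu with h | h
        · exact absurd hxv (not_le.mpr (signneg x (memA hXF hxX) z hz h))
        · exact h
      refine ⟨x, ?_, ?_⟩
      · rw [Finset.mem_filter]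
        refine ⟨hxX, fun u' hu' => ?_⟩
        rw [Set.mem_singleton_iff] at hu'
        rw [hu']; exact hxu0
      · rw [signzero x z hxu0] at hxv
        exact le_of_mul_le_mul_left (by linarith) hspos
    · rintro ⟨-, hstab⟩
      refine ⟨mem_sphere_zero_iff_norm.mpr (hnorm1 z hz huz), ?_⟩
      intro X hX
      by_cases hex : ∃ x ∈ X, 0 < ⟪toE x, u⟫_ℝ
      · obtain ⟨x, hxX, hxu⟩ := hex
        exact ⟨x, hxX, signpos x (memA hX hxX) z hz hxu⟩
      · push_neg at hex
        have hXneg : ∀ x ∈ X, ∀ u' ∈ ({u} : Set (E d)), ⟪toE x, u'⟫_ℝ ≤ 0 := by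
          intro x hx u' hu'
          rw [Set.mem_singleton_iff] at hu'; subst hu'; exact hex x hx
        have hY : (X.filter fun x => ∀ u' ∈ ({u} : Set (E d)), ⟪toE x, u'⟫_ℝ = 0)
            ∈ induced d F {u} := by
          rw [induced, Finset.mem_image]
          exact ⟨X, Finset.mem_filter.mpr ⟨hX, hXneg⟩, rfl⟩
        obtain ⟨x, hxY, hxz⟩ := hstab _ hY
        rw [Finset.mem_filter] at hxY
        have hxu0 : ⟪toE x, u⟫_ℝ = 0 := hxY.2 u rfl
        refine ⟨x, hxY.1, ?_⟩
        rw [signzero x z hxu0]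
        exact mul_nonneg hspos.le hxz
  have hdec : ∀ v ∈ sSphere (sphereOf d W) u η,
      ‖sθ⁻¹ • (v - cθ • u)‖ = 1 ∧ ⟪u, sθ⁻¹ • (v - cθ • u)⟫_ℝ = 0 ∧
      (sθ⁻¹ • (v - cθ • u)) ∈ (Submodule.span ℝ W)ᗮ ∧
      v = cθ • u + sθ • (sθ⁻¹ • (v - cθ • u)) := by
    intro v hv
    obtain ⟨⟨hv1, hv2⟩, hv3⟩ := hv
    have hvn : ‖v‖ = 1 := mem_sphere_zero_iff_norm.mp hv1
    have hip : ⟪u, v⟫_ℝ = cθ := by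
      have h := norm_sub_sq_real u v
      rw [hv3, hu1, hvn] at h
      rw [hcθ]; nlinarith
    have hzn : ‖v - cθ • u‖ = sθ := by
      have h := norm_sub_sq_real v (cθ • u)
      rw [norm_smul, hu1, real_inner_smul_right, hvn] at h
      have hvu : ⟪v, u⟫_ℝ = cθ := by rw [real_inner_comm]; exact hip
      rw [Real.norm_eq_abs, hvu, mul_one, sq_abs] at h
      apply eq_of_sq_eq'' (norm_nonneg _) hspos.le
      rw [h, hs2]; ring
    refine ⟨?_, ?_, ?_, ?_⟩
    · rw [norm_smul, hzn, Real.norm_eq_abs, abs_of_pos (inv_pos.mpr hspos),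
        inv_mul_cancel₀ hspos.ne']
    · rw [real_inner_smul_right, inner_sub_right, real_inner_smul_right,
        real_inner_self_eq_norm_sq, hu1, hip]
      ring
    · exact Submodule.smul_mem _ _ (Submodule.sub_mem _ hv2 (Submodule.smul_mem _ _ huW))
    · rw [smul_smul, mul_inv_cancel₀ hspos.ne', one_smul]; abel
  have hzsph : ∀ z : E d, ‖z‖ = 1 → ⟪u, z⟫_ℝ = 0 → z ∈ (Submodule.span ℝ W)ᗮ →
      z ∈ sphereOf d (W ∪ {u}) := by
    intro z hz huz hzW
    refine ⟨mem_sphere_zero_iff_norm.mpr hz, mem_orth_span' _ _ ?_⟩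
    intro y hy
    rcases hy with hy | hy
    · exact (Submodule.mem_orthogonal _ z).mp hzW y (Submodule.subset_span hy)
    · rw [Set.mem_singleton_iff] at hy; subst hy; exact huz
  have hzsph' : ∀ z ∈ sphereOf d (W ∪ {u}),
      ‖z‖ = 1 ∧ ⟪u, z⟫_ℝ = 0 ∧ z ∈ (Submodule.span ℝ W)ᗮ := by
    rintro z ⟨hz1, hz2⟩
    have huK : u ∈ Submodule.span ℝ (W ∪ {u}) := Submodule.subset_span (Or.inr rfl)
    have hWK : Submodule.span ℝ W ≤ Submodule.span ℝ (W ∪ {u}) :=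
      Submodule.span_mono Set.subset_union_left
    exact ⟨mem_sphere_zero_iff_norm.mp hz1, (Submodule.mem_orthogonal _ z).mp hz2 u huK,
      Submodule.orthogonal_le hWK hz2⟩
  have hproj : ∀ v ∈ sSphere (sphereOf d W) u η,
      projDir (W ∪ {u}) v = sθ⁻¹ • (v - cθ • u) := by
    intro v hv
    obtain ⟨hz1, hz2, hz3, hz4⟩ := hdec v hv
    have hzS : (sθ⁻¹ • (v - cθ • u)) ∈ sphereOf d (W ∪ {u}) := hzsph _ hz1 hz2 hz3
    have huK : (cθ • u) ∈ Submodule.span ℝ (W ∪ {u}) :=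
      Submodule.smul_mem _ _ (Submodule.subset_span (Or.inr rfl))
    have hex : ∃ v' : E d, v' ∈ sphereOf d (W ∪ {u}) ∧
        ∃ w ∈ Submodule.span ℝ (W ∪ {u}), ∃ lam : ℝ, 0 < lam ∧ v = w + lam • v' :=
      ⟨sθ⁻¹ • (v - cθ • u), hzS, cθ • u, huK, sθ, hspos, hz4⟩
    rw [projDir, dif_pos hex]
    obtain ⟨hcS, w, hwK, lam, hlam, hveq⟩ := hex.choose_spec
    have hz'K : hex.choose ∈ (Submodule.span ℝ (W ∪ {u}))ᗮ := hcS.2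
    have hzK : (sθ⁻¹ • (v - cθ • u)) ∈ (Submodule.span ℝ (W ∪ {u}))ᗮ := hzS.2
    have hveq' := hz4.symm.trans hveq
    have ha : w - cθ • u = sθ • (sθ⁻¹ • (v - cθ • u)) - lam • hex.choose := by
      calc w - cθ • u
          = (w + lam • hex.choose) - cθ • u - lam • hex.choose := by abel
        _ = (cθ • u + sθ • (sθ⁻¹ • (v - cθ • u))) - cθ • u - lam • hex.choose := by
            rw [← hveq']
        _ = sθ • (sθ⁻¹ • (v - cθ • u)) - lam • hex.choose := by abel
    have haK : w - cθ • u ∈ Submodule.span ℝ (W ∪ {u}) := Submodule.sub_mem _ hwK huK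
    have haKo : w - cθ • u ∈ (Submodule.span ℝ (W ∪ {u}))ᗮ := by
      rw [ha]
      exact Submodule.sub_mem _ (Submodule.smul_mem _ _ hzK) (Submodule.smul_mem _ _ hz'K)
    have ha0 : w - cθ • u = 0 :=
      inner_self_eq_zero.mp (Submodule.inner_right_of_mem_orthogonal haK haKo)
    rw [ha0] at ha
    have hsz : sθ • (sθ⁻¹ • (v - cθ • u)) = lam • hex.choose := by
      have h7 := ha.symm
      rwa [sub_eq_zero] at h7
    have hz'n : ‖hex.choose‖ = 1 := mem_sphere_zero_iff_norm.mp hcS.1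
    have h8 := congrArg norm hsz
    rw [norm_smul, hz1, norm_smul, hz'n, Real.norm_eq_abs, Real.norm_eq_abs,
      abs_of_pos hspos, abs_of_pos hlam, mul_one, mul_one] at h8
    rw [← h8] at hsz
    exact (smul_right_injective (E d) hspos.ne' hsz).symm
  constructor
  · intro v hv
    obtain ⟨hz1, hz2, hz3, hz4⟩ := hdec v hv
    rw [hproj v hv]
    have h9 := hcore (sθ⁻¹ • (v - cθ • u)) hz1 hz2
    rw [← hz4] at h9
    exact h9
  · refine ⟨sθ⁻¹, LinearIsometryEquiv.refl ℝ (E d), -((sθ⁻¹ * cθ) • u),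
      inv_pos.mpr hspos, ?_, ?_⟩
    · have hid : (LinearIsometryEquiv.refl ℝ (E d)).toLinearEquiv.toLinearMap
          = LinearMap.id := rfl
      rw [hid, LinearMap.det_id]
    · have hmap : ∀ w : E d,
          sθ⁻¹ • (LinearIsometryEquiv.refl ℝ (E d)) w + -((sθ⁻¹ * cθ) • u)
            = sθ⁻¹ • (w - cθ • u) := by
        intro w
        rw [LinearIsometryEquiv.coe_refl, id_eq, smul_sub, smul_smul]
        abel
      ext z
      constructor
      · rintro ⟨hzfam, hzS⟩
        obtain ⟨hzn, huz, hzW⟩ := hzsph' z hzS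
        refine ⟨cθ • u + sθ • z, ⟨?_, ?_⟩, ?_⟩
        · exact (hcore z hzn huz).mpr hzfam
        · refine ⟨⟨?_, ?_⟩, ?_⟩
          · exact mem_sphere_zero_iff_norm.mpr (hnorm1 z hzn huz)
          · exact Submodule.add_mem _ (Submodule.smul_mem _ _ huW)
              (Submodule.smul_mem _ _ hzW)
          · have heq : u - (cθ • u + sθ • z) = (1 - cθ) • u - sθ • z := by
              rw [sub_smul, one_smul]; abel
            rw [heq]
            apply eq_of_sq_eq'' (norm_nonneg _) hη.le
            have hin : ⟪(1 - cθ) • u, sθ • z⟫_ℝ = 0 := by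
              rw [real_inner_smul_left, real_inner_smul_right, huz]; ring
            rw [norm_sub_sq_real, hin, norm_smul, norm_smul, hu1, hzn,
              Real.norm_eq_abs, Real.norm_eq_abs]
            rw [mul_one, mul_one, mul_zero, sub_zero, sq_abs, sq_abs, hs2, hcθ]
            ring
        · beta_reduce
          rw [hmap]
          have h10 : cθ • u + sθ • z - cθ • u = sθ • z := by abel
          rw [h10, smul_smul, inv_mul_cancel₀ hspos.ne', one_smul]
      · rintro ⟨v, ⟨hvfam, hvS⟩, rfl⟩
        obtain ⟨hz1, hz2, hz3, hz4⟩ := hdec v hvS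
        beta_reduce
        rw [hmap]
        constructor
        · refine (hcore _ hz1 hz2).mp ?_
          rw [← hz4]; exact hvfam
        · exact hzsph _ hz1 hz2 hz3

end BootstrapU

end
end

section
/- Let Q ⊆ S_Q^{d-1} be quasistable for range R, and let u, v ∈ Q be such that Cell_Q(u) ∩ Cell_Q(v) ≠ ∅. Then there does not exist w ∈ L_R with ⟨u,w⟩ < 0 and ⟨v,w⟩ > 0. -/
open scoped InnerProductSpace ENNReal Classical
open MeasureTheory

noncomputable section

namespace BootstrapU

theorem cell_meets_hyperplane_aux {d : ℕ} (Q : Finset (E d)) (u w x : E d)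
    (hnorm : ∀ q ∈ Q, ‖q‖ = 1) (hu : u ∈ Q)
    (hemi : ∀ y ∈ unitSphere d, ∃ q ∈ Q, 0 < ⟪q, y⟫_ℝ)
    (hx : x ∈ cellOf Q u) (ha : ⟪u, w⟫_ℝ < 0) (hb : 0 < ⟪x, w⟫_ℝ) :
    ∃ z ∈ cellOf Q u, ⟪z, w⟫_ℝ = 0 := by
  obtain ⟨hxS, hxc⟩ := hx
  obtain ⟨q, hqQ, hqx⟩ := hemi x hxS
  have hux : 0 < ⟪u, x⟫_ℝ := lt_of_lt_of_le hqx (hxc q hqQ)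
  set a := ⟪u, w⟫_ℝ with haw
  set b := ⟪x, w⟫_ℝ with hbw
  have hab : a - b < 0 := by linarith
  set t := a / (a - b) with ht
  have htb : t * (a - b) = a := div_mul_cancel₀ a (ne_of_lt hab)
  have ht0 : 0 < t := div_pos_of_neg_of_neg ha hab
  have ht1 : t < 1 := by nlinarith
  set y := (1 - t) • u + t • x with hy
  have huu : ⟪u, u⟫_ℝ = 1 := by
    rw [real_inner_self_eq_norm_mul_norm, hnorm u hu]; ring
  have hyw : ⟪y, w⟫_ℝ = 0 := by
    rw [hy, inner_add_left, real_inner_smul_left, real_inner_smul_left, ← haw, ← hbw]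
    linear_combination -htb
  have hyu : 0 < ⟪u, y⟫_ℝ := by
    rw [hy, inner_add_right, real_inner_smul_right, real_inner_smul_right, huu]
    nlinarith
  have hy0 : y ≠ 0 := by
    intro h
    rw [h, inner_zero_right] at hyu
    exact lt_irrefl 0 hyu
  have hny : 0 < ‖y‖ := norm_pos_iff.mpr hy0
  refine ⟨‖y‖⁻¹ • y, ⟨?_, ?_⟩, ?_⟩
  · have : ‖‖y‖⁻¹ • y‖ = 1 := by
      rw [norm_smul, norm_inv, norm_norm, inv_mul_cancel₀ (ne_of_gt hny)]
    simpa [unitSphere, mem_sphere_zero_iff_norm] using this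
  · intro q' hq'
    rw [real_inner_smul_right, real_inner_smul_right]
    have h1 : ⟪q', u⟫_ℝ ≤ 1 := by
      have := real_inner_le_norm q' u
      rwa [hnorm q' hq', hnorm u hu, one_mul] at this
    have h2 : ⟪q', x⟫_ℝ ≤ ⟪u, x⟫_ℝ := hxc q' hq'
    have hqy : ⟪q', y⟫_ℝ ≤ ⟪u, y⟫_ℝ := by
      rw [hy, inner_add_right, inner_add_right, real_inner_smul_right,
        real_inner_smul_right, real_inner_smul_right, real_inner_smul_right, huu]
      nlinarith
    have : (0 : ℝ) < ‖y‖⁻¹ := inv_pos.mpr hny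
    nlinarith
  · rw [real_inner_smul_left, hyw, mul_zero]

/-- adjacent directions of a quasistable set do not straddle a
hyperplane `{w}^⊥` with `w ∈ L_R`. -/
theorem quasistable_innerprod (d : ℕ) (R : ℝ) (Q : Finset (E d))
    (hQ : IsQuasistable d R Q) (u v : E d) (hu : u ∈ Q) (hv : v ∈ Q)
    (hcell : (cellOf Q u ∩ cellOf Q v).Nonempty) :
    ¬∃ w ∈ LR d R, ⟪u, w⟫_ℝ < 0 ∧ 0 < ⟪v, w⟫_ℝ := by
  rintro ⟨w, hwL, hau, hbv⟩
  obtain ⟨hrat, hemi, hcellw⟩ := hQ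
  have hnorm : ∀ q ∈ Q, ‖q‖ = 1 := by
    intro q hq
    have := (hrat hq).1
    simpa [unitSphere, mem_sphere_zero_iff_norm] using this
  obtain ⟨x, hxu, hxv⟩ := hcell
  have hune : ⟪u, w⟫_ℝ ≠ 0 := ne_of_lt hau
  have hvne : ⟪v, w⟫_ℝ ≠ 0 := ne_of_gt hbv
  rcases lt_trichotomy (⟪x, w⟫_ℝ) 0 with hx0 | hx0 | hx0
  · -- use v with -w
    have ha' : ⟪v, -w⟫_ℝ < 0 := by rw [inner_neg_right]; linarith
    have hb' : 0 < ⟪x, -w⟫_ℝ := by rw [inner_neg_right]; linarith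
    obtain ⟨z, hz, hzw⟩ := cell_meets_hyperplane_aux Q v (-w) x hnorm hv hemi hxv ha' hb'
    have hzw' : ⟪z, w⟫_ℝ = 0 := by
      rw [inner_neg_right] at hzw; linarith
    exact hvne (((hcellw v hv w hwL)).mp ⟨z, hz, hzw'⟩)
  · exact hune (((hcellw u hu w hwL)).mp ⟨x, hxu, hx0⟩)
  · obtain ⟨z, hz, hzw⟩ := cell_meets_hyperplane_aux Q u w x hnorm hu hemi hxu hau hx0
    exact hune (((hcellw u hu w hwL)).mp ⟨z, hz, hzw⟩)

end BootstrapU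

end
end

section
/- Let k ≥ 0 and let H be a finite collection of proper linear subspaces of R^{k+1}, closed under intersections. Then there exists δ = (δ_{-1},δ_0,…,δ_{k-1}) with δ_{-1} = 1 such that (R^{k+1}, S^k, H, δ) is a good spherical buffer system, where S^k is the unit sphere of R^{k+1} centred at the origin. -/
open scoped InnerProductSpace ENNReal Classical
open MeasureTheory

noncomputable section

namespace BootstrapU

/-- Auxiliary for `sbs_good_delta_exists`: the distance to `H ⊓ H'` is controlled by the sum of
the distances to `H` and `H'`. -/
lemma sbs_key_dist {m : ℕ} (H H' : Submodule ℝ (E m)) :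
    ∃ C : ℝ, 1 ≤ C ∧ ∀ z : E m,
      Metric.infDist z ((H ⊓ H' : Submodule ℝ (E m)) : Set (E m)) ≤
        C * (Metric.infDist z (H : Set (E m)) + Metric.infDist z (H' : Set (E m))) := by
  set K : Submodule ℝ (E m) := H ⊓ H'
  haveI : IsClosed (K : Set (E m)) := Submodule.closed_of_finiteDimensional K
  haveI : IsClosed (H : Set (E m)) := Submodule.closed_of_finiteDimensional H
  haveI : IsClosed (H' : Set (E m)) := Submodule.closed_of_finiteDimensional H'
  let f : E m →ₗ[ℝ] (E m ⧸ H) × (E m ⧸ H') := H.mkQ.prod H'.mkQ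
  have hker : LinearMap.ker f = K := by
    simp [f, LinearMap.ker_prod, Submodule.ker_mkQ, K]
  let g : (E m ⧸ K) →ₗ[ℝ] (E m ⧸ H) × (E m ⧸ H') :=
    K.liftQ f hker.ge
  have hg : LinearMap.ker g = ⊥ :=
    Submodule.ker_liftQ_eq_bot _ _ _ hker.le
  obtain ⟨C, hC0, hlip⟩ := g.exists_antilipschitzWith hg
  refine ⟨max C 1, le_max_right _ _, fun z => ?_⟩
  have h1 : Metric.infDist z (K : Set (E m)) = ‖(Submodule.Quotient.mk z : E m ⧸ K)‖ :=
    (QuotientAddGroup.norm_mk (S := K.toAddSubgroup) z).symm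
  have h2 : Metric.infDist z (H : Set (E m)) = ‖(Submodule.Quotient.mk z : E m ⧸ H)‖ :=
    (QuotientAddGroup.norm_mk (S := H.toAddSubgroup) z).symm
  have h3 : Metric.infDist z (H' : Set (E m)) = ‖(Submodule.Quotient.mk z : E m ⧸ H')‖ :=
    (QuotientAddGroup.norm_mk (S := H'.toAddSubgroup) z).symm
  have hle : ‖(Submodule.Quotient.mk z : E m ⧸ K)‖ ≤ C * ‖g (Submodule.Quotient.mk z)‖ := by
    have := hlip.le_mul_dist (Submodule.Quotient.mk z) 0
    simpa [dist_eq_norm] using this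
  have hgz : g (Submodule.Quotient.mk z) =
      ((Submodule.Quotient.mk z : E m ⧸ H), (Submodule.Quotient.mk z : E m ⧸ H')) := rfl
  rw [h1, h2, h3]
  calc ‖(Submodule.Quotient.mk z : E m ⧸ K)‖ ≤ C * ‖g (Submodule.Quotient.mk z)‖ := hle
    _ ≤ max C 1 * (‖(Submodule.Quotient.mk z : E m ⧸ H)‖ +
        ‖(Submodule.Quotient.mk z : E m ⧸ H')‖) := by
      rw [hgz]
      have hb : ‖((Submodule.Quotient.mk z : E m ⧸ H), (Submodule.Quotient.mk z : E m ⧸ H'))‖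
          ≤ ‖(Submodule.Quotient.mk z : E m ⧸ H)‖ + ‖(Submodule.Quotient.mk z : E m ⧸ H')‖ := by
        rw [Prod.norm_def]
        exact max_le (le_add_of_nonneg_right (norm_nonneg _))
          (le_add_of_nonneg_left (norm_nonneg _))
      exact mul_le_mul (le_max_left _ _) hb (norm_nonneg _)
        (le_trans zero_le_one (le_max_right _ _))

/-- the radii of a good spherical buffer system can always be chosen. -/
theorem sbs_good_delta_exists (k : ℕ) (Hs : Finset (Submodule ℝ (E (k + 1))))
    (hproper : ∀ H ∈ Hs, H ≠ ⊤) (hinter : ∀ H ∈ Hs, ∀ H' ∈ Hs, H ⊓ H' ∈ Hs) :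
    ∃ del : ℕ → ℝ, del 0 = 1 ∧
      IsGoodSBS k (Metric.sphere (0 : E (k + 1)) 1) Hs del := by
  classical
  choose Cf hCf1 hCf using fun H H' : Submodule ℝ (E (k + 1)) => sbs_key_dist H H'
  set C : ℝ := 1 + ∑ p ∈ Hs ×ˢ Hs, Cf p.1 p.2 with hCdef
  have hCf0 : ∀ H H' : Submodule ℝ (E (k + 1)), 0 ≤ Cf H H' := fun H H' =>
    le_trans zero_le_one (hCf1 H H')
  have hC1 : 1 ≤ C := by
    have : (0 : ℝ) ≤ ∑ p ∈ Hs ×ˢ Hs, Cf p.1 p.2 :=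
      Finset.sum_nonneg fun p _ => hCf0 p.1 p.2
    simp only [hCdef]; linarith
  have hCfle : ∀ H ∈ Hs, ∀ H' ∈ Hs, Cf H H' ≤ C := by
    intro H hH H' hH'
    have hmem : (H, H') ∈ Hs ×ˢ Hs := Finset.mk_mem_product hH hH'
    have := Finset.single_le_sum (f := fun p : Submodule ℝ (E (k + 1)) × Submodule ℝ (E (k + 1))
      => Cf p.1 p.2) (fun p _ => hCf0 p.1 p.2) hmem
    simp only [hCdef]; linarith
  set q : ℝ := 6 * C + 4 with hqdef
  have hq0 : 0 < q := by simp only [hqdef]; linarith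
  have hq3 : 3 < q := by simp only [hqdef]; linarith
  have hqinv1 : q⁻¹ ≤ 1 := by
    rw [inv_le_one_iff₀]; right; linarith
  set del : ℕ → ℝ := fun j => q⁻¹ ^ j with hdel
  have hd0 : del 0 = 1 := pow_zero _
  have hdpos : ∀ j, 0 < del j := fun j => pow_pos (inv_pos.mpr hq0) j
  have hdanti : ∀ a b : ℕ, a ≤ b → del b ≤ del a := fun a b hab =>
    pow_le_pow_of_le_one (le_of_lt (inv_pos.mpr hq0)) hqinv1 hab
  have hstep : ∀ j, del (j + 1) = del j * q⁻¹ := fun j => pow_succ _ _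
  have hqmul : q * q⁻¹ = 1 := mul_inv_cancel₀ (ne_of_gt hq0)
  have hmain : ∀ c : ℕ, 6 * C * del (c + 1) < del c := by
    intro c
    rw [hstep]
    have h1 := hdpos c
    have h2 : 0 < q⁻¹ := inv_pos.mpr hq0
    nlinarith [mul_pos h2 h1, mul_pos h1 h2]
  refine ⟨del, hd0, ⟨⟨?_, ?_, hproper, hinter, ?_⟩, ?_⟩⟩
  · rw [hd0]; exact one_pos
  · rw [hd0]
  · intro i _
    refine ⟨hdpos (i + 1), ?_⟩
    rw [hstep]
    have h1 := hdpos i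
    have h2 : 0 < q⁻¹ := inv_pos.mpr hq0
    nlinarith [mul_pos h1 h2]
  · intro H hH H' hH' hnle hnle' z hz
    obtain ⟨hz1, hz2⟩ := hz
    by_cases hH0 : Module.finrank ℝ H = 0
    · simp only [expBuffer, hH0, if_pos] at hz1; exact absurd hz1 (Set.notMem_empty z)
    by_cases hH'0 : Module.finrank ℝ H' = 0
    · simp only [expBuffer, hH'0, if_pos] at hz2; exact absurd hz2 (Set.notMem_empty z)
    simp only [expBuffer, hH0, hH'0, if_neg, Set.mem_setOf_eq, not_false_iff] at hz1 hz2
    obtain ⟨hzS, hd1⟩ := hz1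
    obtain ⟨_, hd2⟩ := hz2
    set K : Submodule ℝ (E (k + 1)) := H ⊓ H' with hKdef
    set c : ℕ := Module.finrank ℝ K with hcdef
    have hKH : K < H := inf_lt_left.mpr hnle
    have hKH' : K < H' := inf_lt_right.mpr hnle'
    have hr1 : c < Module.finrank ℝ H := Submodule.finrank_lt_finrank_of_lt hKH
    have hr2 : c < Module.finrank ℝ H' := Submodule.finrank_lt_finrank_of_lt hKH'
    have hda : del (Module.finrank ℝ H) ≤ del (c + 1) := hdanti _ _ hr1
    have hdb : del (Module.finrank ℝ H') ≤ del (c + 1) := hdanti _ _ hr2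
    have hnn1 : 0 ≤ Metric.infDist z (H : Set (E (k + 1))) := Metric.infDist_nonneg
    have hnn2 : 0 ≤ Metric.infDist z (H' : Set (E (k + 1))) := Metric.infDist_nonneg
    have hchain : Metric.infDist z (K : Set (E (k + 1))) < del c := by
      have h1 := hCf H H' z
      have h2 : Metric.infDist z (H : Set (E (k + 1))) +
          Metric.infDist z (H' : Set (E (k + 1))) < 6 * del (c + 1) := by linarith only [hd1, hd2, hda, hdb]
      have h3 : Cf H H' * (Metric.infDist z (H : Set (E (k + 1))) +
          Metric.infDist z (H' : Set (E (k + 1)))) < Cf H H' * (6 * del (c + 1)) := by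
        have hCfpos : 0 < Cf H H' := lt_of_lt_of_le zero_lt_one (hCf1 H H')
        exact mul_lt_mul_of_pos_left h2 hCfpos
      have h4 : Cf H H' * (6 * del (c + 1)) ≤ C * (6 * del (c + 1)) := by
        have := hCfle H hH H' hH'
        have hpos : 0 < 6 * del (c + 1) := by have := hdpos (c + 1); linarith only [this]
        exact mul_le_mul_of_nonneg_right this (le_of_lt hpos)
      have h5 : C * (6 * del (c + 1)) < del c := by
        linarith only [hmain c]
      linarith only [h1, h3, h4, h5]
    by_cases hc0 : c = 0
    · exfalso
      have hKbot : K = ⊥ := Submodule.finrank_eq_zero.mp hc0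
      have : Metric.infDist z (K : Set (E (k + 1))) = 1 := by
        rw [hKbot, Submodule.bot_coe, Metric.infDist_singleton]
        exact Metric.mem_sphere.mp hzS
      rw [this, hc0, hd0] at hchain
      exact lt_irrefl _ hchain
    · simp only [buffer, ← hcdef, hc0, if_neg, Set.mem_setOf_eq, not_false_iff]
      exact ⟨hzS, hchain⟩


end BootstrapU

end
end

section
/- Let V ⊆ R^d be the span of a finite (possibly empty) set of vectors of Z^d, and let H = V^⊥. Then H ∩ S_Q^{d-1} is dense in H ∩ S^{d-1}. -/
open scoped InnerProductSpace ENNReal Classical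
open MeasureTheory

noncomputable section

namespace BootstrapU

/-! Over `ℚ` the dot product is anisotropic, so `ℚ^d = span_ℚ S ⊕ (span_ℚ S)^⊥` for the
rational vectors `S` spanning `V`; hence the orthogonal projection onto `H = V^⊥` maps rational
points to rational points. Since `ℚ^d` is dense in `ℝ^d` and this projection is continuous and
onto `H`, rational points are dense in `H`. Normalising them, which is continuous away from `0`,
gives rational directions dense in `H ∩ S^{d-1}`. -/

theorem isCompl_dotProductBilin_orthogonal {K ι : Type*} [Field K] [LinearOrder K]
    [IsStrictOrderedRing K] [Fintype ι] (W : Submodule K (ι → K)) :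
    IsCompl W (LinearMap.BilinForm.orthogonal (dotProductBilin K K) W) := by
  refine (LinearMap.BilinForm.isCompl_orthogonal_iff_disjoint (B := dotProductBilin K K)
    fun x y (h : x ⬝ᵥ y = 0) => (dotProduct_comm y x).trans h).2 ?_
  exact Submodule.disjoint_def.2 fun x hxW hxW' => dotProduct_self_eq_zero.1 (hxW' x hxW)

def ratToE (d : ℕ) : (Fin d → ℚ) →ₗ[ℚ] E d where
  toFun q := WithLp.toLp 2 fun i => (q i : ℝ)
  map_add' p q := by ext i; simp
  map_smul' c q := by ext i; simp [Rat.smul_def]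

@[simp]
theorem ratToE_apply {d : ℕ} (q : Fin d → ℚ) (i : Fin d) : ratToE d q i = q i := rfl

theorem ratToE_intCast {d : ℕ} (x : Fin d → ℤ) : ratToE d (fun i => (x i : ℚ)) = toE x := by
  ext i; simp [toE]

theorem inner_ratToE {d : ℕ} (p q : Fin d → ℚ) :
    ⟪ratToE d p, ratToE d q⟫_ℝ = ((p ⬝ᵥ q : ℚ) : ℝ) := by
  simp [PiLp.inner_apply, dotProduct, mul_comm]

theorem denseRange_ratToE (d : ℕ) : DenseRange (ratToE d) :=
  (WithLp.equiv 2 (Fin d → ℝ)).symm.surjective.denseRange.comp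
    (DenseRange.piMap fun _ => Rat.denseRange_cast) (PiLp.continuous_toLp 2 _)

theorem starProjection_ratToE_mem_range {d : ℕ} (S : Set (Fin d → ℚ)) (q : Fin d → ℚ) :
    (Submodule.span ℝ (ratToE d '' S))ᗮ.starProjection (ratToE d q) ∈
      LinearMap.range (ratToE d) := by
  obtain ⟨v, hv, u, hu, rfl⟩ := Submodule.mem_sup.1
    ((isCompl_dotProductBilin_orthogonal (Submodule.span ℚ S)).sup_eq_top ▸
      Submodule.mem_top (x := q))
  have hv' : ratToE d v ∈ Submodule.span ℝ (ratToE d '' S) :=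
    Submodule.span_le_restrictScalars ℚ ℝ _
      (Submodule.apply_mem_span_image_of_mem_span (ratToE d) hv)
  have hu' : ratToE d u ∈ (Submodule.span ℝ (ratToE d '' S))ᗮ := by
    refine (Submodule.span_singleton_le_iff_mem _ _).1 (Submodule.isOrtho_span.2 ?_).symm
    rintro _ ⟨s, hs, rfl⟩ _ rfl
    rw [inner_ratToE, show s ⬝ᵥ u = 0 from hu s (Submodule.subset_span hs), Rat.cast_zero]
  exact ⟨u, (Submodule.eq_starProjection_of_mem_orthogonal' hu'
    (Submodule.le_orthogonal_orthogonal _ hv') (by rw [map_add, add_comm])).symm⟩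

theorem subset_closure_orthogonal_inter_range_ratToE {d : ℕ} (S : Set (Fin d → ℚ)) :
    ((Submodule.span ℝ (ratToE d '' S))ᗮ : Set (E d)) ⊆
      closure ((Submodule.span ℝ (ratToE d '' S))ᗮ ∩ Set.range (ratToE d)) := by
  set H := (Submodule.span ℝ (ratToE d '' S))ᗮ
  intro w hw
  rw [← H.starProjection_eq_self_iff.2 hw]
  refine image_closure_subset_closure_image H.starProjection.continuous
    ⟨w, (denseRange_ratToE d).closure_range ▸ Set.mem_univ w, rfl⟩ |> closure_mono ?_
  rintro _ ⟨_, ⟨q, rfl⟩, rfl⟩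
  exact ⟨H.starProjection_apply_mem _, starProjection_ratToE_mem_range S q⟩

theorem mem_closure_image_inv_norm_smul {F : Type*} [NormedAddCommGroup F] [NormedSpace ℝ F]
    {A : Set F} {w : F} (hw : w ∈ closure A) (hw1 : ‖w‖ = 1) :
    w ∈ closure ((fun x => ‖x‖⁻¹ • x) '' (A \ {0})) := by
  have hw0 : w ≠ 0 := by rintro rfl; simp at hw1
  have hw' : w ∈ closure (A \ {0}) := by
    simpa [Set.sdiff_eq, Set.inter_comm] using isOpen_compl_singleton.inter_closure ⟨hw0, hw⟩
  have hcont : ContinuousAt (fun x : F => ‖x‖⁻¹ • x) w :=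
    (continuous_norm.continuousAt.inv₀ (norm_ne_zero_iff.2 hw0)).smul continuousAt_id
  simpa [hw1] using hcont.continuousWithinAt.mem_closure_image hw'

theorem inv_norm_smul_ratToE_mem_ratSphere {d : ℕ} {q : Fin d → ℚ} (hq : ratToE d q ≠ 0) :
    ‖ratToE d q‖⁻¹ • ratToE d q ∈ ratSphere d := by
  refine ⟨by simp [unitSphere, norm_smul, hq], ?_⟩
  obtain ⟨⟨b, hb⟩, hbq⟩ := IsLocalization.exist_integer_multiples_of_finite (nonZeroDivisors ℤ) q
  choose x hx using hbq
  have hb0 : (b : ℝ) ≠ 0 := Int.cast_ne_zero.2 (nonZeroDivisors.ne_zero hb)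
  have hxq : toE x = (b : ℝ) • ratToE d q := by
    ext i
    simpa [← ratToE_intCast] using congrArg ((↑) : ℚ → ℝ) (hx i)
  refine ⟨x, ?_, b * ‖ratToE d q‖, ?_⟩
  · rintro rfl
    exact smul_ne_zero hb0 hq (hxq ▸ by ext i; simp [toE])
  · rw [hxq, smul_smul, mul_assoc, mul_inv_cancel₀ (norm_ne_zero_iff.2 hq), mul_one]

/-- rational directions are dense on rational subspheres. -/
theorem rational_directions_dense (d : ℕ) (T : Finset (Fin d → ℤ)) :
    (((Submodule.span ℝ (toE '' (T : Set (Fin d → ℤ))))ᗮ : Set (E d)) ∩ unitSphere d) ⊆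
      closure
        (((Submodule.span ℝ (toE '' (T : Set (Fin d → ℤ))))ᗮ : Set (E d)) ∩ ratSphere d) := by
  set S : Set (Fin d → ℚ) := (fun (t : Fin d → ℤ) i => (t i : ℚ)) '' T
  have hS : ratToE d '' S = toE '' T := by
    simp only [S, Set.image_image, ratToE_intCast]
  set H := (Submodule.span ℝ (toE '' (T : Set (Fin d → ℤ))))ᗮ
  rintro w ⟨hwH, hw1⟩
  have hw : w ∈ closure ((H : Set (E d)) ∩ Set.range (ratToE d)) := by
    simpa only [H, ← hS] using subset_closure_orthogonal_inter_range_ratToE S (hS ▸ hwH)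
  refine closure_mono ?_ (mem_closure_image_inv_norm_smul hw (by simpa [unitSphere] using hw1))
  rintro _ ⟨_, ⟨⟨hxH, q, rfl⟩, hx0⟩, rfl⟩
  exact ⟨H.smul_mem _ hxH, inv_norm_smul_ratToE_mem_ratSphere hx0⟩

end BootstrapU

end
end

section
/- Let U be a d-dimensional update family with radius R_0 = max{‖x‖ : x ∈ X ∈ U}, and let Q ⊆ S_Q^{d-1} be quasistable for range R, where R ≥ R_0. Let W ⊆ Q and u ∈ Q be such that W ∪ {u} is a clique in the Voronoi graph of Q, i.e., Cell_Q(v) ∩ Cell_Q(v') ≠ ∅ for all v, v' ∈ W ∪ {u}. Then (U[W])[u] = U[W ∪ {u}]. -/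
open scoped InnerProductSpace ENNReal Classical
open MeasureTheory

noncomputable section

namespace BootstrapU

lemma unit_of_mem {d : ℕ} {R : ℝ} {Q : Finset (E d)} (hQ : IsQuasistable d R Q)
    {a : E d} (ha : a ∈ Q) : ‖a‖ = 1 := by
  have h1 : a ∈ unitSphere d := (hQ.1 ha).1
  simpa [unitSphere] using h1

lemma self_mem_cell {d : ℕ} {R : ℝ} {Q : Finset (E d)} (hQ : IsQuasistable d R Q)
    {a : E d} (ha : a ∈ Q) : a ∈ cellOf Q a := by
  refine ⟨(hQ.1 ha).1, ?_⟩
  intro v hv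
  have hva : ⟪v, a⟫_ℝ ≤ ‖v‖ * ‖a‖ := real_inner_le_norm v a
  have haa : ⟪a, a⟫_ℝ = ‖a‖ * ‖a‖ := real_inner_self_eq_norm_mul_norm a
  rw [unit_of_mem hQ ha, unit_of_mem hQ hv] at hva
  rw [unit_of_mem hQ ha] at haa
  linarith

lemma keyA {d : ℕ} {R : ℝ} {Q : Finset (E d)} (hQ : IsQuasistable d R Q)
    {a z : E d} (ha : a ∈ Q) (hz : z ∈ cellOf Q a)
    {x : Fin d → ℤ} (hx0 : x ≠ 0) (hxR : ‖toE x‖ ≤ R)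
    (hax : ⟪a, toE x⟫_ℝ ≠ 0) (hprod : ⟪z, toE x⟫_ℝ * ⟪a, toE x⟫_ℝ ≤ 0) : False := by
  have hLR : toE x ∈ LR d R := ⟨x, hx0, hxR, 1, (one_smul ℝ (toE x)).symm⟩
  have hiff := hQ.2.2 a ha (toE x) hLR
  have hne : ¬ (cellOf Q a ∩ {p | ⟪p, toE x⟫_ℝ = 0}).Nonempty := fun h => hax (hiff.mp h)
  rcases eq_or_ne (⟪z, toE x⟫_ℝ) 0 with hz0 | hz0
  · exact hne ⟨z, hz, hz0⟩
  have hzx : ⟪z, toE x⟫_ℝ * ⟪a, toE x⟫_ℝ < 0 := lt_of_le_of_ne hprod (mul_ne_zero hz0 hax)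
  have hanorm : ‖a‖ = 1 := unit_of_mem hQ ha
  have hznorm : ‖z‖ = 1 := by simpa [unitSphere] using hz.1
  have haa : ⟪a, a⟫_ℝ = 1 := by
    rw [real_inner_self_eq_norm_mul_norm, hanorm]; ring
  by_cases hza : z = -a
  · have hnegunit : (-a) ∈ unitSphere d := by
      simp [unitSphere, hanorm]
    obtain ⟨q, hq, hq'⟩ := hQ.2.1 (-a) hnegunit
    have h1 := hz.2 q hq
    rw [hza] at h1
    simp only [inner_neg_right] at h1 hq'
    have h2 := self_mem_cell hQ ha
    have h3 := h2.2 q hq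
    linarith
  -- main case: build a zero of the inner product on the segment from a to z
  set s := ⟪a, toE x⟫_ℝ with hs_def
  set r := ⟪z, toE x⟫_ℝ with hr_def
  have hsr : s - r ≠ 0 := by
    intro h
    have hsr2 : s = r := by linarith
    rw [hsr2] at hzx
    nlinarith [sq_nonneg r]
  set t := s / (s - r) with ht_def
  have hts : t * (s - r) = s := div_mul_cancel₀ _ hsr
  have hpos : 0 < s * (s - r) := by nlinarith [hzx, sq_nonneg s]
  have hss : 0 < s * s := mul_self_pos.mpr hax
  have h2 : t * (s * (s - r)) = s * s := by linear_combination s * hts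
  have h3 : (t - 1) * (s * (s - r)) = r * s := by linear_combination s * hts
  have ht0 : 0 < t := by
    by_contra h
    push_neg at h
    have := mul_nonpos_of_nonpos_of_nonneg h (le_of_lt hpos)
    linarith
  have ht1 : t < 1 := by
    by_contra h
    push_neg at h
    have := mul_nonneg (by linarith : (0:ℝ) ≤ t - 1) (le_of_lt hpos)
    linarith
  set p : E d := (1 - t) • a + t • z with hp_def
  have hpx : ⟪p, toE x⟫_ℝ = 0 := by
    rw [hp_def, inner_add_left, real_inner_smul_left, real_inner_smul_left]
    rw [← hs_def, ← hr_def]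
    linear_combination -hts
  have hpne : p ≠ 0 := by
    intro hp0
    have hnorm : ‖(1 - t) • a‖ = ‖t • z‖ := by
      have : (1 - t) • a = -(t • z) := by
        rw [eq_neg_iff_add_eq_zero]; exact hp0
      rw [this, norm_neg]
    rw [norm_smul, norm_smul, hanorm, hznorm] at hnorm
    have habs : |1 - t| = |t| := by simpa using hnorm
    rw [abs_of_pos ht0, abs_of_pos (by linarith : (0:ℝ) < 1 - t)] at habs
    have ht2 : t = 1/2 := by linarith
    apply hza
    have h2 : (2:ℝ) • p = a + z := by
      rw [hp_def, ht2, smul_add, smul_smul, smul_smul]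
      norm_num
    rw [hp0, smul_zero] at h2
    exact eq_neg_of_add_eq_zero_right h2.symm
  have hpnorm : 0 < ‖p‖ := norm_pos_iff.mpr hpne
  set y : E d := ‖p‖⁻¹ • p with hy_def
  have hynorm : ‖y‖ = 1 := by
    rw [hy_def, norm_smul, norm_inv, norm_norm, inv_mul_cancel₀ (ne_of_gt hpnorm)]
  have hycell : y ∈ cellOf Q a := by
    refine ⟨by simp [unitSphere, hynorm], ?_⟩
    intro q hq
    rw [hy_def, real_inner_smul_right, real_inner_smul_right]
    have h1 : ⟪q, p⟫_ℝ ≤ ⟪a, p⟫_ℝ := by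
      rw [hp_def, inner_add_right, inner_add_right, real_inner_smul_right,
        real_inner_smul_right, real_inner_smul_right, real_inner_smul_right]
      have h2 := (self_mem_cell hQ ha).2 q hq
      have h3 := hz.2 q hq
      nlinarith
    have hinvpos : (0:ℝ) ≤ ‖p‖⁻¹ := inv_nonneg.mpr (le_of_lt hpnorm)
    exact mul_le_mul_of_nonneg_left h1 hinvpos
  refine hne ⟨y, hycell, ?_⟩
  show ⟪y, toE x⟫_ℝ = 0
  rw [hy_def, real_inner_smul_left, hpx, mul_zero]

lemma keyB {d : ℕ} {R : ℝ} {Q : Finset (E d)} (hQ : IsQuasistable d R Q)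
    {u v : E d} (hu : u ∈ Q) (hv : v ∈ Q)
    (hcell : (cellOf Q v ∩ cellOf Q u).Nonempty)
    {x : Fin d → ℤ} (hx0 : x ≠ 0) (hxR : ‖toE x‖ ≤ R)
    (hxv : ⟪toE x, v⟫_ℝ < 0) (hxu : 0 < ⟪toE x, u⟫_ℝ) : False := by
  obtain ⟨w, hwv, hwu⟩ := hcell
  have hcu : ⟪u, toE x⟫_ℝ ≠ 0 := by
    rw [real_inner_comm]; exact ne_of_gt hxu
  have hcv : ⟪v, toE x⟫_ℝ ≠ 0 := by
    rw [real_inner_comm]; exact ne_of_lt hxv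
  rcases le_or_gt (⟪w, toE x⟫_ℝ) 0 with hw | hw
  · refine keyA hQ hu hwu hx0 hxR hcu ?_
    have : 0 < ⟪u, toE x⟫_ℝ := by rw [real_inner_comm]; exact hxu
    exact mul_nonpos_of_nonpos_of_nonneg hw (le_of_lt this)
  · refine keyA hQ hv hwv hx0 hxR hcv ?_
    have : ⟪v, toE x⟫_ℝ < 0 := by rw [real_inner_comm]; exact hxv
    exact le_of_lt (mul_neg_of_pos_of_neg hw this)

/-- induced families along a clique can be formed one direction at a
time. -/
theorem induced_commutes (d : ℕ) (U : Finset (Finset (Fin d → ℤ)))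
    (hU : IsUpdateFamily U) (R : ℝ)
    (hR : ∀ X ∈ U, ∀ x ∈ X, ‖toE x‖ ≤ R)
    (Q : Finset (E d)) (hQ : IsQuasistable d R Q)
    (W : Set (E d)) (hW : W ⊆ (Q : Set (E d))) (u : E d) (hu : u ∈ Q)
    (hclique : ∀ v ∈ W ∪ {u}, ∀ v' ∈ W ∪ {u}, (cellOf Q v ∩ cellOf Q v').Nonempty) :
    induced d (induced d U W) {u} = induced d U (W ∪ {u}) := by
  have key : ∀ X ∈ U, (∀ x ∈ X, ∀ v ∈ W, ⟪toE x, v⟫_ℝ ≤ 0) →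
      (∀ x ∈ X, (∀ v ∈ W, ⟪toE x, v⟫_ℝ = 0) → ⟪toE x, u⟫_ℝ ≤ 0) →
      ∀ x ∈ X, ⟪toE x, u⟫_ℝ ≤ 0 := by
    intro X hX hXW hXu x hx
    by_contra hpos
    push_neg at hpos
    have hx0 : x ≠ 0 := fun h => (hU X hX).2 (h ▸ hx)
    have hxR := hR X hX x hx
    have hnW : ¬ ∀ v ∈ W, ⟪toE x, v⟫_ℝ = 0 := fun h =>
      absurd (hXu x hx h) (not_le.mpr hpos)
    push_neg at hnW
    obtain ⟨v, hvW, hv0⟩ := hnW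
    have hvneg : ⟪toE x, v⟫_ℝ < 0 := lt_of_le_of_ne (hXW x hx v hvW) hv0
    exact keyB hQ hu (hW hvW)
      (hclique v (Set.mem_union_left _ hvW) u (Set.mem_union_right _ rfl))
      hx0 hxR hvneg hpos
  have hfilter : ∀ X : Finset (Fin d → ℤ),
      (X.filter fun x => ∀ v ∈ W, ⟪toE x, v⟫_ℝ = 0).filter
        (fun x => ∀ v ∈ ({u} : Set (E d)), ⟪toE x, v⟫_ℝ = 0) =
      X.filter fun x => ∀ v ∈ W ∪ {u}, ⟪toE x, v⟫_ℝ = 0 := by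
    intro X
    rw [Finset.filter_filter]
    apply Finset.filter_congr
    intro x _
    constructor
    · rintro ⟨h1, h2⟩ v hv
      rcases hv with hv | hv
      · exact h1 v hv
      · rw [Set.mem_singleton_iff] at hv
        rw [hv]
        exact h2 u rfl
    · intro h
      exact ⟨fun v hv => h v (Set.mem_union_left _ hv),
        fun v hv => by
          rw [Set.mem_singleton_iff] at hv
          rw [hv]
          exact h u (Set.mem_union_right _ rfl)⟩
  ext Z
  simp only [induced, Finset.mem_image, Finset.mem_filter]
  constructor
  · rintro ⟨Y, ⟨⟨X, ⟨hX, hXW⟩, rfl⟩, hYu⟩, rfl⟩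
    refine ⟨X, ⟨hX, ?_⟩, (hfilter X).symm⟩
    intro x hx v hv
    rcases hv with hv | hv
    · exact hXW x hx v hv
    · rw [Set.mem_singleton_iff] at hv
      rw [hv]
      refine key X hX hXW ?_ x hx
      intro y hy hyW
      exact hYu y (Finset.mem_filter.mpr ⟨hy, hyW⟩) u rfl
  · rintro ⟨X, ⟨hX, hXWu⟩, rfl⟩
    refine ⟨X.filter fun x => ∀ v ∈ W, ⟪toE x, v⟫_ℝ = 0,
      ⟨⟨X, ⟨hX, fun x hx v hv => hXWu x hx v (Set.mem_union_left _ hv)⟩, rfl⟩, ?_⟩,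
      hfilter X⟩
    intro y hy v hv
    rw [Set.mem_singleton_iff] at hv
    rw [hv]
    exact hXWu y (Finset.mem_of_mem_filter y hy) u (Set.mem_union_right _ rfl)

end BootstrapU

end
end

section
/- Let Q ⊆ S_Q^{d-1} be quasistable for range R, let W ⊆ Q, and let w ∈ L_R with w ∈ W^⊥. Then P(W,w) = ∪_{λ∈[0,1]} (P(W) + λw). -/
open scoped InnerProductSpace ENNReal Classical
open MeasureTheory

noncomputable section

namespace BootstrapU

/-! For `x ∈ P(W,w)`, the orthogonal projection `x - t • w` of `x` onto `w^⊥` lies in `P(∅)`: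
by quasistability the maximum over `Q` of a functional `⟪·, z⟫` with `z ⊥ w` is attained at
some `q ⊥ w`, and on such `q` the constraints of `P(W,w)` and `P(∅)` coincide. Each constraint
`⟪x - λ • w, u⟫ ≤ 1` is monotone in `λ` and also holds at `λ = δ(u,w) ∈ {0, 1}`, so all of them
hold at the clamp of `t` to `[0, 1]`. -/

section Line

variable {F : Type*} [NormedAddCommGroup F] [InnerProductSpace ℝ F]

theorem exists_inner_sub_smul_eq_zero (x w : F) : ∃ t : ℝ, ⟪x - t • w, w⟫_ℝ = 0 := by
  rcases eq_or_ne w 0 with rfl | hw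
  · exact ⟨0, by simp⟩
  · refine ⟨⟪x, w⟫_ℝ / ⟪w, w⟫_ℝ, ?_⟩
    rw [inner_sub_left, real_inner_smul_left, div_mul_cancel₀ _ (inner_self_ne_zero.2 hw),
      sub_self]

theorem inner_sub_smul_of_inner_eq_zero {w u : F} (h : ⟪w, u⟫_ℝ = 0) (x : F) (c : ℝ) :
    ⟪x - c • w, u⟫_ℝ = ⟪x, u⟫_ℝ := by
  rw [inner_sub_left, real_inner_smul_left, h, mul_zero, sub_zero]

theorem inner_sub_ite_of_inner_eq_zero {w u : F} (h : ⟪w, u⟫_ℝ = 0) (x : F) (p : Prop)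
    [Decidable p] : ⟪x - (if p then w else 0), u⟫_ℝ = ⟪x, u⟫_ℝ := by
  split_ifs <;> simp [inner_sub_left, h]

theorem inner_sub_smul_le_of_mem_uIcc {x w u : F} {r a b c : ℝ}
    (ha : ⟪x - a • w, u⟫_ℝ ≤ r) (hb : ⟪x - b • w, u⟫_ℝ ≤ r) (hc : c ∈ Set.uIcc a b) :
    ⟪x - c • w, u⟫_ℝ ≤ r := by
  simp only [inner_sub_left, real_inner_smul_left] at ha hb ⊢
  rcases Set.mem_uIcc.1 hc with ⟨hac, hcb⟩ | ⟨hbc, hca⟩ <;>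
    rcases le_total 0 ⟪w, u⟫_ℝ with hwu | hwu <;> nlinarith

end Line

theorem max_zero_min_one_mem_uIcc (t : ℝ) {e : ℝ} (he : e ∈ Set.Icc (0 : ℝ) 1) :
    max 0 (min t 1) ∈ Set.uIcc t e := by
  rcases le_total t 0 with ht | ht
  · rw [min_eq_left (ht.trans zero_le_one), max_eq_left ht]
    exact Set.mem_uIcc.2 (Or.inl ⟨ht, he.1⟩)
  rcases le_total t 1 with ht' | ht'
  · rw [min_eq_left ht', max_eq_right ht]
    exact Set.left_mem_uIcc
  · rw [min_eq_right ht', max_eq_right zero_le_one]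
    exact Set.mem_uIcc.2 (Or.inr ⟨he.2, ht'⟩)

variable {d : ℕ} {Q : Finset (E d)} {W : Set (E d)} {w x y u z : E d}

section Cell

variable (hcell : ∀ q ∈ Q, (cellOf Q q ∩ {x | ⟪x, w⟫_ℝ = 0}).Nonempty → ⟪q, w⟫_ℝ = 0)
include hcell

theorem forall_inner_le_one_of_forall_perp (hz : ⟪z, w⟫_ℝ = 0)
    (hperp : ∀ q ∈ Q, ⟪q, w⟫_ℝ = 0 → ⟪z, q⟫_ℝ ≤ 1) : ∀ p ∈ Q, ⟪z, p⟫_ℝ ≤ 1 := by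
  intro p hp
  rcases eq_or_ne z 0 with rfl | hz0
  · simp
  obtain ⟨q, hq, hmax⟩ := Q.exists_max_image (fun q => ⟪q, z⟫_ℝ) ⟨p, hp⟩
  have hnz : 0 < ‖z‖ := norm_pos_iff.2 hz0
  have hqw : ⟪q, w⟫_ℝ = 0 := by
    refine hcell q hq ⟨‖z‖⁻¹ • z, ⟨?_, fun v hv => ?_⟩, ?_⟩
    · simp [unitSphere, norm_smul, hnz.ne']
    · simp only [real_inner_smul_right]
      exact mul_le_mul_of_nonneg_left (hmax v hv) (by positivity)
    · simp [real_inner_smul_left, hz]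
  calc ⟪z, p⟫_ℝ = ⟪p, z⟫_ℝ := real_inner_comm _ _
    _ ≤ ⟪q, z⟫_ℝ := hmax p hp
    _ = ⟪z, q⟫_ℝ := real_inner_comm _ _
    _ ≤ 1 := hperp q hq hqw

theorem exists_forall_inner_sub_smul_le_one (hx : x ∈ polyPw d Q W w) :
    ∃ t : ℝ, ∀ p ∈ Q, ⟪x - t • w, p⟫_ℝ ≤ 1 := by
  obtain ⟨t, ht⟩ := exists_inner_sub_smul_eq_zero x w
  refine ⟨t, forall_inner_le_one_of_forall_perp hcell ht fun q hq hqw => ?_⟩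
  have hwq : ⟪w, q⟫_ℝ = 0 := by rw [real_inner_comm, hqw]
  rw [inner_sub_smul_of_inner_eq_zero hwq, ← inner_sub_ite_of_inner_eq_zero hwq x (0 ≤ ⟪q, w⟫_ℝ)]
  exact hx.1 q hq

end Cell

theorem exists_mem_Icc_inner_sub_smul_le_one (hx : x ∈ polyPw d Q W w) (hu : u ∈ Q) :
    ∃ e ∈ Set.Icc (0 : ℝ) 1, ⟪x - e • w, u⟫_ℝ ≤ 1 := by
  have := hx.1 u hu
  split_ifs at this
  · exact ⟨1, ⟨zero_le_one, le_rfl⟩, by rwa [one_smul]⟩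
  · exact ⟨0, ⟨le_rfl, zero_le_one⟩, by rwa [zero_smul]⟩

theorem add_smul_mem_polyPw {lam : ℝ} (hy : y ∈ polyP d Q W) (hlam : lam ∈ Set.Icc (0 : ℝ) 1)
    (hperp : ∀ u ∈ W, ⟪w, u⟫_ℝ = 0) : y + lam • w ∈ polyPw d Q W w := by
  refine ⟨fun u hu => ?_, fun u hu => ?_⟩
  · have hyu := hy.1 u hu
    split_ifs with h <;> rw [real_inner_comm] at h <;>
      simp only [inner_sub_left, inner_add_left, real_inner_smul_left, sub_zero]
    · nlinarith [hlam.2]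
    · nlinarith [hlam.1]
  · have hwu := hperp u hu
    rw [inner_sub_ite_of_inner_eq_zero hwu, inner_add_left, real_inner_smul_left, hwu, mul_zero,
      add_zero]
    exact hy.2 u hu

theorem sub_smul_mem_polyP {t : ℝ} (hx : x ∈ polyPw d Q W w)
    (ht : ∀ p ∈ Q, ⟪x - t • w, p⟫_ℝ ≤ 1) (hperp : ∀ u ∈ W, ⟪w, u⟫_ℝ = 0) :
    x - max 0 (min t 1) • w ∈ polyP d Q W := by
  refine ⟨fun u hu => ?_, fun u hu => ?_⟩
  · obtain ⟨e, he, hxe⟩ := exists_mem_Icc_inner_sub_smul_le_one hx hu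
    exact inner_sub_smul_le_of_mem_uIcc (ht u hu) hxe (max_zero_min_one_mem_uIcc t he)
  · rw [inner_sub_smul_of_inner_eq_zero (hperp u hu),
      ← inner_sub_ite_of_inner_eq_zero (hperp u hu) x (0 ≤ ⟪u, w⟫_ℝ)]
    exact hx.2 u hu

theorem tube_is_tube_general (d : ℕ) (R : ℝ) (Q : Finset (E d)) (hQ : IsQuasistable d R Q)
    (W : Set (E d)) (w : E d) (hw : w ∈ LR d R)
    (hperp : ∀ u ∈ W, ⟪w, u⟫_ℝ = 0) :
    polyPw d Q W w = ⋃ lam ∈ Set.Icc (0 : ℝ) 1, (fun x => x + lam • w) '' polyP d Q W := by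
  ext x
  simp only [Set.mem_iUnion, Set.mem_image, exists_prop]
  constructor
  · intro hx
    obtain ⟨t, ht⟩ := exists_forall_inner_sub_smul_le_one (fun u hu => (hQ.2.2 u hu w hw).1) hx
    exact ⟨max 0 (min t 1), ⟨le_max_left _ _, max_le zero_le_one (min_le_right _ _)⟩, _,
      sub_smul_mem_polyP hx ht hperp, sub_add_cancel _ _⟩
  · rintro ⟨lam, hlam, y, hy, rfl⟩
    exact add_smul_mem_polyPw hy hlam hperp

/-- the tubular polytope `P(W, w)` is the union of the translates of
`P(W)` by `λ • w` for `λ ∈ [0,1]`. -/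
theorem tube_is_tube (d : ℕ) (R : ℝ) (Q : Finset (E d)) (hQ : IsQuasistable d R Q)
    (W : Set (E d)) (hW : W ⊆ (Q : Set (E d))) (w : E d) (hw : w ∈ LR d R)
    (hperp : ∀ u ∈ W, ⟪w, u⟫_ℝ = 0) :
    polyPw d Q W w = ⋃ lam ∈ Set.Icc (0 : ℝ) 1, (fun x => x + lam • w) '' polyP d Q W :=
  tube_is_tube_general d R Q hQ W w hw hperp

end BootstrapU

end
end
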